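/- arXiv:2002.01959 — 9 statements merged into one kernel-verified Lean document; each statement's English description precedes it below -/
import Mathlib

section
/- Let H be a Hilbert space, V_1, ..., V_n vector spaces, and T_k : H → V_k linear operators for k = 1, ..., n. If for arbitrary elements v_1 ∈ Ran(T_1), ..., v_n ∈ Ran(T_n) there exists x ∈ H with T_k x = v_k for all k, then the system of closed subspaces (ker T_1)^⊥, ..., (ker T_n)^⊥ possesses the inverse best approximation property. -/
noncomputable def orthProjCLM {𝕜 H : Type*} [RCLike 𝕜] [NormedAddCommGroup H]
    [InnerProductSpace 𝕜 H] [CompleteSpace H] (K : Submodule 𝕜 H)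
    (hK : IsClosed (K : Set H)) : H →L[𝕜] H :=
  haveI : CompleteSpace K := hK.completeSpace_coe
  K.subtypeL.comp (K.orthogonalProjectionOnto)

/-- The system of closed subspaces `K 0, ..., K (n-1)` possesses the
inverse best approximation property: for arbitrary `x i ∈ K i` there is `y`
whose orthogonal projection onto each `K i` equals `x i`. -/
def IBAP {𝕜 H : Type*} [RCLike 𝕜] [NormedAddCommGroup H] [InnerProductSpace 𝕜 H]
    [CompleteSpace H] {n : ℕ} (K : Fin n → Submodule 𝕜 H)
    (hK : ∀ i, IsClosed ((K i : Set H))) : Prop :=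
  ∀ x : Fin n → H, (∀ i, x i ∈ K i) →
    ∃ y : H, ∀ i, orthProjCLM (K i) (hK i) y = x i

/-! If `y` solves `T k y = T k (x k)` for every `k`, then `y - x k ∈ ker T k ⊆ (ker T k)ᗮᗮ`, so
`x k ∈ (ker T k)ᗮ` is the orthogonal projection of `y` onto `(ker T k)ᗮ`. -/

section

variable {𝕜 H : Type*} [RCLike 𝕜] [NormedAddCommGroup H] [InnerProductSpace 𝕜 H]
  [CompleteSpace H]

theorem orthProjCLM_eq_of_mem_of_sub_mem_orthogonal {K : Submodule 𝕜 H}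
    (hK : IsClosed (K : Set H)) {u v : H} (hv : v ∈ K) (huv : u - v ∈ Kᗮ) :
    orthProjCLM K hK u = v :=
  haveI : CompleteSpace K := hK.completeSpace_coe
  K.eq_starProjection_of_mem_orthogonal hv huv

theorem orthProjCLM_orthogonal_ker_eq {V : Type*} [AddCommGroup V] [Module 𝕜 V]
    (T : H →ₗ[𝕜] V) {u v : H} (hv : v ∈ (LinearMap.ker T)ᗮ) (huv : T u = T v) :
    orthProjCLM (LinearMap.ker T)ᗮ (Submodule.isClosed_orthogonal _) u = v := by
  refine orthProjCLM_eq_of_mem_of_sub_mem_orthogonal _ hv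
    ((LinearMap.ker T).le_orthogonal_orthogonal ?_)
  rw [LinearMap.mem_ker, map_sub, huv, sub_self]

end

/-- if the system of equations `T k x = v k` is solvable for all
choices of `v k` in the ranges, then `(ker T 1)ᗮ, ..., (ker T n)ᗮ` has the IBAP. -/
theorem stmt_1 {𝕜 H : Type*} [RCLike 𝕜] [NormedAddCommGroup H]
    [InnerProductSpace 𝕜 H] [CompleteSpace H] {n : ℕ}
    (V : Fin n → Type*) [∀ k, AddCommGroup (V k)] [∀ k, Module 𝕜 (V k)]
    (T : ∀ k, H →ₗ[𝕜] V k)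
    (h : ∀ v : ∀ k, V k, (∀ k, v k ∈ LinearMap.range (T k)) →
      ∃ x : H, ∀ k, T k x = v k) :
    IBAP (fun k => (LinearMap.ker (T k))ᗮ)
      (fun k => Submodule.isClosed_orthogonal _) := by
  intro x hx
  obtain ⟨y, hy⟩ := h (fun k => T k (x k)) (fun k => LinearMap.mem_range_self _ _)
  exact ⟨y, fun k => orthProjCLM_orthogonal_ker_eq (T k) (hx k) (hy k)⟩
end

section
/- Let H be a Hilbert space and H_1, ..., H_n closed subspaces of H, with P_k the orthogonal projection onto H_k. The following are equivalent: (1) the system H_1, ..., H_n is linearly independent; (2) for arbitrary elements x_1 ∈ H_1, ..., x_n ∈ H_n and every ε > 0 there exists x ∈ H such that ‖P_k x − x_k‖ ≤ ε for all k = 1, ..., n. -/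
/-!
Send `y` to the family of its projections, `T y = (P_k y)_k`, in the `ℓ²`-sum of the `H_k`.
The adjoint of `T` is `w ↦ ∑ w_k`, so linear independence of the system says exactly that
`ker T* = 0`, i.e. that `T` has dense range; and for finitely many summands density of the
range of `T` is the approximation property.
-/

open scoped InnerProductSpace InnerProduct

namespace ContinuousLinearMap

variable {𝕜 E F : Type*} [RCLike 𝕜] [NormedAddCommGroup E] [NormedAddCommGroup F]
  [InnerProductSpace 𝕜 E] [InnerProductSpace 𝕜 F] [CompleteSpace E] [CompleteSpace F]

theorem denseRange_iff_ker_adjoint_eq_bot (T : E →L[𝕜] F) :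
    DenseRange T ↔ T†.ker = ⊥ := by
  rw [← orthogonal_range, ← Submodule.topologicalClosure_eq_top_iff,
    ← Submodule.dense_iff_topologicalClosure_eq_top]
  rfl

end ContinuousLinearMap

namespace Submodule

variable {𝕜 H ι : Type*} [RCLike 𝕜] [NormedAddCommGroup H] [InnerProductSpace 𝕜 H]
  (K : ι → Submodule 𝕜 H) [∀ i, (K i).HasOrthogonalProjection]

noncomputable def orthogonalProjectionPiLp : H →L[𝕜] PiLp 2 fun i => K i :=
  (PiLp.continuousLinearEquiv 2 𝕜 fun i => K i).symm.toContinuousLinearMap ∘L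
    ContinuousLinearMap.pi fun i => (K i).orthogonalProjectionOnto

@[simp]
theorem orthogonalProjectionPiLp_apply (y : H) (i : ι) :
    (orthogonalProjectionPiLp K y) i = (K i).orthogonalProjectionOnto y :=
  rfl

theorem denseRange_orthogonalProjectionPiLp_iff [Fintype ι] :
    DenseRange (orthogonalProjectionPiLp K) ↔
      ∀ x : ι → H, (∀ i, x i ∈ K i) → ∀ ε : ℝ, 0 < ε →
        ∃ y : H, ∀ i, ‖((K i).orthogonalProjectionOnto y : H) - x i‖ ≤ ε := by
  let e := PiLp.continuousLinearEquiv 2 𝕜 fun i => K i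
  have hdense : DenseRange (orthogonalProjectionPiLp K) ↔
      DenseRange fun y i => (K i).orthogonalProjectionOnto y :=
    ⟨fun h => e.surjective.denseRange.comp h e.continuous,
      fun h => e.symm.surjective.denseRange.comp h e.symm.continuous⟩
  simp only [hdense, Metric.denseRange_iff]
  constructor
  · intro h x hx ε hε
    obtain ⟨y, hy⟩ := h (fun i => ⟨x i, hx i⟩) ε hε
    refine ⟨y, fun i => ?_⟩
    have := (dist_pi_lt_iff hε).1 hy i
    rw [dist_comm, Subtype.dist_eq, dist_eq_norm] at this
    exact this.le
  · intro h x r hr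
    obtain ⟨y, hy⟩ := h (fun i => x i) (fun i => (x i).2) (r / 2) (half_pos hr)
    refine ⟨y, (dist_pi_lt_iff hr).2 fun i => ?_⟩
    rw [dist_comm, Subtype.dist_eq, dist_eq_norm]
    exact (hy i).trans_lt (half_lt_self hr)

theorem adjoint_orthogonalProjectionPiLp_apply [Fintype ι] [CompleteSpace H]
    [∀ i, CompleteSpace (K i)] (w : PiLp 2 fun i => K i) :
    ((orthogonalProjectionPiLp K)†) w = ∑ i, (w i : H) := by
  refine ext_inner_right 𝕜 fun y => ?_
  rw [ContinuousLinearMap.adjoint_inner_left, PiLp.inner_apply, sum_inner]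
  simp

theorem ker_adjoint_orthogonalProjectionPiLp_eq_bot_iff [Fintype ι] [CompleteSpace H]
    [∀ i, CompleteSpace (K i)] :
    ((orthogonalProjectionPiLp K)†).ker = ⊥ ↔
      ∀ x : ι → H, (∀ i, x i ∈ K i) → ∑ i, x i = 0 → ∀ i, x i = 0 := by
  simp only [LinearMap.ker_eq_bot', ContinuousLinearMap.coe_coe,
    adjoint_orthogonalProjectionPiLp_apply]
  constructor
  · intro h x hx hsum i
    simpa using congrArg (fun w => (w i : H)) (h (WithLp.toLp 2 fun i => ⟨x i, hx i⟩) hsum)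
  · intro h w hw
    ext i
    exact h (fun i => w i) (fun i => (w i).2) hw i

end Submodule

/-- the subspaces `K i` are linearly independent iff the system
has the approximate inverse best approximation property. -/
theorem stmt_3 {𝕜 H : Type*} [RCLike 𝕜] [NormedAddCommGroup H]
    [InnerProductSpace 𝕜 H] [CompleteSpace H] {n : ℕ}
    (K : Fin n → Submodule 𝕜 H) (hK : ∀ i, IsClosed ((K i : Set H))) :
    (∀ x : Fin n → H, (∀ i, x i ∈ K i) → ∑ i, x i = 0 → ∀ i, x i = 0) ↔
      (∀ x : Fin n → H, (∀ i, x i ∈ K i) → ∀ ε : ℝ, 0 < ε →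
        ∃ y : H, ∀ i, ‖orthProjCLM (K i) (hK i) y - x i‖ ≤ ε) := by
  have : ∀ i, CompleteSpace (K i) := fun i => (hK i).completeSpace_coe
  rw [← Submodule.ker_adjoint_orthogonalProjectionPiLp_eq_bot_iff,
    ← ContinuousLinearMap.denseRange_iff_ker_adjoint_eq_bot]
  exact Submodule.denseRange_orthogonalProjectionPiLp_iff K
end

section
/- Let H be a Hilbert space and H_1, ..., H_n closed subspaces of H. The system H_1, ..., H_n possesses the inverse best approximation property if and only if there exist a Hilbert space K, pairwise orthogonal closed subspaces K_1, ..., K_n of K, and a continuous linear bijection φ : H → K with continuous inverse such that φ(H_i) = K_i for all i = 1, ..., n. -/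
universe u

/-! If the system has the IBAP, the map `y ↦ ((P_i y)_i, P_N y)`, where `N` is the common
orthogonal complement of the `H_i`, is a continuous linear bijection of `H` onto the Hilbert sum
`H_1 ⊕ ⋯ ⊕ H_n ⊕ N`, hence an isomorphism by the open mapping theorem. Its adjoint is the summation
map `(x_i)_i ↦ ∑ x_i`, which carries the `i`-th coordinate subspace onto `H_i`; the inverse of this
adjoint is the required `φ`.

Conversely, a system of pairwise orthogonal subspaces has the IBAP (the sum of the prescribed
vectors has the prescribed projections), and the IBAP is transported along an isomorphism
`φ : H → K` with `φ(H_i) ⊆ K_i`: if `s` has the same projections onto the `K_i` as `(φ⁻¹)^* x_i`,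
then `φ^* s` has projection `x_i` onto `H_i`. -/

open Submodule
open scoped InnerProductSpace

noncomputable def ContinuousLinearEquiv.adjoint {𝕜 E F : Type*} [RCLike 𝕜] [NormedAddCommGroup E]
    [InnerProductSpace 𝕜 E] [CompleteSpace E] [NormedAddCommGroup F] [InnerProductSpace 𝕜 F]
    [CompleteSpace F] (e : E ≃L[𝕜] F) : F ≃L[𝕜] E :=
  .equivOfInverse (e : E →L[𝕜] F).adjoint (e.symm : F →L[𝕜] E).adjoint
    (fun x => by
      rw [← ContinuousLinearMap.comp_apply, ← ContinuousLinearMap.adjoint_comp,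
        e.coe_comp_coe_symm, ContinuousLinearMap.adjoint_id, ContinuousLinearMap.id_apply])
    (fun x => by
      rw [← ContinuousLinearMap.comp_apply, ← ContinuousLinearMap.adjoint_comp,
        e.coe_symm_comp_coe, ContinuousLinearMap.adjoint_id, ContinuousLinearMap.id_apply])

@[simp]
theorem ContinuousLinearEquiv.adjoint_apply {𝕜 E F : Type*} [RCLike 𝕜] [NormedAddCommGroup E]
    [InnerProductSpace 𝕜 E] [CompleteSpace E] [NormedAddCommGroup F] [InnerProductSpace 𝕜 F]
    [CompleteSpace F] (e : E ≃L[𝕜] F) (x : F) : e.adjoint x = (e : E →L[𝕜] F).adjoint x :=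
  rfl

theorem Submodule.orthogonalProjectionOnto_eq_of_inner_eq {𝕜 E : Type*} [RCLike 𝕜]
    [NormedAddCommGroup E] [InnerProductSpace 𝕜 E] {K : Submodule 𝕜 E}
    [K.HasOrthogonalProjection] {y : E} {x : K} (h : ∀ k ∈ K, ⟪y, k⟫_𝕜 = ⟪(x : E), k⟫_𝕜) :
    K.orthogonalProjectionOnto y = x :=
  Subtype.ext <| eq_starProjection_of_mem_of_inner_eq_zero x.2 fun k hk => by
    rw [inner_sub_left, h k hk, sub_self]

section CoordinateSubspace

variable {𝕜 ι : Type*} [RCLike 𝕜] {β : ι → Type*} [∀ i, NormedAddCommGroup (β i)]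
  [∀ i, InnerProductSpace 𝕜 (β i)]

variable (𝕜 β) in
def PiLp.coordinateSubspace (i : ι) : Submodule 𝕜 (PiLp 2 β) :=
  ⨅ (j) (_ : j ≠ i), (PiLp.proj 2 β j : PiLp 2 β →L[𝕜] β j).ker

namespace PiLp

theorem mem_coordinateSubspace {i : ι} {w : PiLp 2 β} :
    w ∈ coordinateSubspace 𝕜 β i ↔ ∀ j ≠ i, w j = 0 := by
  simp [coordinateSubspace]

theorem isClosed_coordinateSubspace (i : ι) :
    IsClosed (coordinateSubspace 𝕜 β i : Set (PiLp 2 β)) := by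
  simp only [coordinateSubspace, coe_iInf]
  exact isClosed_iInter fun j => isClosed_iInter fun _ => (PiLp.proj 2 β j).isClosed_ker

variable [DecidableEq ι]

theorem single_mem_coordinateSubspace (i : ι) (a : β i) :
    single 2 i a ∈ coordinateSubspace 𝕜 β i :=
  mem_coordinateSubspace.2 fun _ hj => single_eq_of_ne (p := 2) hj a

theorem single_apply_self_of_mem_coordinateSubspace {i : ι} {w : PiLp 2 β}
    (hw : w ∈ coordinateSubspace 𝕜 β i) : single 2 i (w i) = w := by
  ext j
  by_cases hj : j = i
  · subst hj
    exact single_eq_same ..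
  · rw [single_eq_of_ne (p := 2) hj, mem_coordinateSubspace.1 hw j hj]

variable [Fintype ι]

theorem inner_single_left (i : ι) (a : β i) (w : PiLp 2 β) :
    ⟪single 2 i a, w⟫_𝕜 = ⟪a, w i⟫_𝕜 := by
  rw [inner_apply, Finset.sum_eq_single i
    (fun j _ hj => by rw [single_eq_of_ne (p := 2) hj, inner_zero_left]) (by simp),
    single_eq_same]

omit [DecidableEq ι] in
theorem coordinateSubspace_isOrtho {i j : ι} (hij : i ≠ j) :
    coordinateSubspace 𝕜 β i ⟂ coordinateSubspace 𝕜 β j := by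
  refine isOrtho_iff_inner_eq.2 fun u hu v hv => Finset.sum_eq_zero fun k _ => ?_
  by_cases hk : k = i
  · rw [mem_coordinateSubspace.1 hv k (hk ▸ hij), inner_zero_right]
  · rw [mem_coordinateSubspace.1 hu k hk, inner_zero_left]

end PiLp

end CoordinateSubspace

section PiOrthogonalProjection

variable {𝕜 H ι : Type*} [RCLike 𝕜] [NormedAddCommGroup H] [InnerProductSpace 𝕜 H]

noncomputable def piOrthogonalProjection (M : ι → Submodule 𝕜 H)
    [∀ i, (M i).HasOrthogonalProjection] : H →L[𝕜] PiLp 2 fun i => M i :=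
  (PiLp.continuousLinearEquiv 2 𝕜 fun i => M i).symm.toContinuousLinearMap ∘L
    ContinuousLinearMap.pi fun i => (M i).orthogonalProjectionOnto

variable {M : ι → Submodule 𝕜 H} [∀ i, (M i).HasOrthogonalProjection]

@[simp]
theorem piOrthogonalProjection_apply (y : H) (i : ι) :
    piOrthogonalProjection M y i = (M i).orthogonalProjectionOnto y :=
  rfl

theorem injective_piOrthogonalProjection (hM : (⨆ i, M i)ᗮ = ⊥) :
    Function.Injective (piOrthogonalProjection M) := by
  refine (injective_iff_map_eq_zero _).2 fun y hy => ?_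
  rw [← mem_bot 𝕜, ← hM, ← iInf_orthogonal, mem_iInf]
  intro i
  rw [← orthogonalProjectionOnto_eq_zero_iff, ← piOrthogonalProjection_apply, hy,
    PiLp.zero_apply]

theorem surjective_piOrthogonalProjection_of_mapsTo [CompleteSpace H] {W : Type*}
    [NormedAddCommGroup W] [InnerProductSpace 𝕜 W] [CompleteSpace W] {L : ι → Submodule 𝕜 W}
    [∀ i, (L i).HasOrthogonalProjection] (φ : H ≃L[𝕜] W) (hφ : ∀ i, Set.MapsTo φ (M i) (L i))
    (hL : Function.Surjective (piOrthogonalProjection L)) :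
    Function.Surjective (piOrthogonalProjection M) := by
  intro w
  obtain ⟨s, hs⟩ := hL <|
    WithLp.toLp 2 fun i => (L i).orthogonalProjectionOnto (φ.symm.adjoint (w i))
  refine ⟨(φ : H →L[𝕜] W).adjoint s,
    PiLp.ext fun i => orthogonalProjectionOnto_eq_of_inner_eq fun k hk => ?_⟩
  have hφk : φ k ∈ L i := hφ i hk
  have hs_i : (L i).orthogonalProjectionOnto s =
      (L i).orthogonalProjectionOnto (φ.symm.adjoint (w i)) := by
    rw [← piOrthogonalProjection_apply, hs]
  calc ⟪(φ : H →L[𝕜] W).adjoint s, k⟫_𝕜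
      = ⟪s, ((⟨φ k, hφk⟩ : L i) : W)⟫_𝕜 := ContinuousLinearMap.adjoint_inner_left _ _ _
    _ = ⟪(L i).orthogonalProjectionOnto s, ⟨φ k, hφk⟩⟫_𝕜 :=
        (inner_orthogonalProjectionOnto_eq_of_mem_right _ _).symm
    _ = ⟪φ.symm.adjoint (w i), φ k⟫_𝕜 := by
        rw [hs_i, inner_orthogonalProjectionOnto_eq_of_mem_right]
    _ = ⟪(w i : H), k⟫_𝕜 := by
        rw [φ.symm.adjoint_apply, ContinuousLinearMap.adjoint_inner_left,
          ContinuousLinearEquiv.coe_coe, φ.symm_apply_apply]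

variable [Fintype ι]

theorem surjective_piOrthogonalProjection_of_isOrtho (hM : Pairwise fun i j => M i ⟂ M j) :
    Function.Surjective (piOrthogonalProjection M) := by
  intro w
  refine ⟨∑ j, (w j : H), PiLp.ext fun i => ?_⟩
  rw [piOrthogonalProjection_apply, map_sum, Finset.sum_eq_single i (fun j _ hji => ?_) (by simp),
    orthogonalProjectionOnto_mem_subspace_eq_self]
  exact orthogonalProjectionOnto_eq_zero_iff.2 ((hM hji).le (w j).2)

variable [CompleteSpace H] [DecidableEq ι] [∀ i, CompleteSpace (M i)]

theorem adjoint_piOrthogonalProjection_single (i : ι) (x : M i) :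
    (piOrthogonalProjection M).adjoint (PiLp.single 2 i x) = x := by
  refine ext_inner_right 𝕜 fun y => ?_
  rw [ContinuousLinearMap.adjoint_inner_left, PiLp.inner_single_left,
    piOrthogonalProjection_apply, inner_orthogonalProjectionOnto_eq_of_mem_left]

theorem image_adjoint_coordinateSubspace (e : H ≃L[𝕜] PiLp 2 fun i => M i)
    (he : (e : H →L[𝕜] PiLp 2 fun i => M i) = piOrthogonalProjection M) (i : ι) :
    e.adjoint '' (PiLp.coordinateSubspace 𝕜 (fun i => M i) i : Set _) = M i := by
  ext x
  constructor
  · rintro ⟨w, hw, rfl⟩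
    rw [e.adjoint_apply, he, ← PiLp.single_apply_self_of_mem_coordinateSubspace hw,
      adjoint_piOrthogonalProjection_single]
    exact (w i).2
  · intro hx
    refine ⟨PiLp.single 2 i ⟨x, hx⟩, PiLp.single_mem_coordinateSubspace i _, ?_⟩
    rw [e.adjoint_apply, he, adjoint_piOrthogonalProjection_single]

end PiOrthogonalProjection

section ExtendByOrthogonal

variable {𝕜 H ι : Type*} [RCLike 𝕜] [NormedAddCommGroup H] [InnerProductSpace 𝕜 H]

def extendByOrthogonal (K : ι → Submodule 𝕜 H) : Option ι → Submodule 𝕜 H :=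
  fun o => o.elim (⨆ i, K i)ᗮ K

variable {K : ι → Submodule 𝕜 H}

theorem orthogonal_iSup_extendByOrthogonal : (⨆ o, extendByOrthogonal K o)ᗮ = ⊥ := by
  unfold extendByOrthogonal
  rw [iSup_option_elim, eq_bot_iff]
  intro y hy
  exact (orthogonal_disjoint _).le_bot
    ⟨orthogonal_le le_sup_right hy, orthogonal_le le_sup_left hy⟩

variable [CompleteSpace H] [∀ i, CompleteSpace (K i)]

instance (o : Option ι) : CompleteSpace (extendByOrthogonal K o) := by
  cases o with
  | none => exact instOrthogonalCompleteSpace _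
  | some i => exact ‹∀ i, CompleteSpace (K i)› i

theorem surjective_piOrthogonalProjection_extendByOrthogonal [Fintype ι]
    (hK : Function.Surjective (piOrthogonalProjection K)) :
    Function.Surjective (piOrthogonalProjection (extendByOrthogonal K)) := by
  intro w
  set N := (⨆ i, K i)ᗮ
  have hN : ∀ i, N ≤ (K i)ᗮ := fun i => orthogonal_le (le_iSup K i)
  obtain ⟨y, hy⟩ := hK (WithLp.toLp 2 fun i => w (some i))
  refine ⟨y - N.starProjection y + (w none : H), PiLp.ext fun o => ?_⟩
  cases o with
  | none =>
    refine Subtype.ext ?_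
    change N.starProjection (y - N.starProjection y + w none) = w none
    rw [map_add, map_sub, starProjection_eq_self_iff.2 (starProjection_apply_mem N y),
      starProjection_eq_self_iff.2 (show (w none : H) ∈ N from (w none).2), sub_self, zero_add]
  | some i =>
    change (K i).orthogonalProjectionOnto _ = w (some i)
    rw [map_add, map_sub, ← piOrthogonalProjection_apply, hy,
      orthogonalProjectionOnto_eq_zero_iff.2 (hN i (starProjection_apply_mem N y)),
      orthogonalProjectionOnto_eq_zero_iff.2 (hN i (w none).2), sub_zero, add_zero]

end ExtendByOrthogonal

theorem ibap_iff_surjective_piOrthogonalProjection {𝕜 H : Type*} [RCLike 𝕜]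
    [NormedAddCommGroup H] [InnerProductSpace 𝕜 H] [CompleteSpace H] {n : ℕ}
    (K : Fin n → Submodule 𝕜 H) (hK : ∀ i, IsClosed ((K i : Set H)))
    [∀ i, (K i).HasOrthogonalProjection] :
    IBAP K hK ↔ Function.Surjective (piOrthogonalProjection K) := by
  refine ⟨fun h w => ?_, fun h x hx => ?_⟩
  · obtain ⟨y, hy⟩ := h (fun i => w i) (fun i => (w i).2)
    exact ⟨y, PiLp.ext fun i => Subtype.ext (hy i)⟩
  · obtain ⟨y, hy⟩ := h (WithLp.toLp 2 fun i => ⟨x i, hx i⟩)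
    exact ⟨y, fun i => congrArg Subtype.val (PiLp.ext_iff.1 hy i)⟩

/-- IBAP iff the system is isomorphic (via a continuous linear
bijection with continuous inverse) to a system of pairwise orthogonal closed
subspaces of some Hilbert space. -/
theorem stmt_6 {𝕜 : Type*} {H : Type u} [RCLike 𝕜] [NormedAddCommGroup H]
    [InnerProductSpace 𝕜 H] [CompleteSpace H] {n : ℕ}
    (K : Fin n → Submodule 𝕜 H) (hK : ∀ i, IsClosed ((K i : Set H))) :
    IBAP K hK ↔
      ∃ (W : Type u) (_ : NormedAddCommGroup W) (_ : InnerProductSpace 𝕜 W)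
        (_ : CompleteSpace W) (L : Fin n → Submodule 𝕜 W),
          (∀ i, IsClosed ((L i : Set W))) ∧
          (∀ i j, i ≠ j → ∀ u ∈ L i, ∀ v ∈ L j, (inner 𝕜 u v : 𝕜) = 0) ∧
          ∃ φ : H ≃L[𝕜] W, ∀ i, φ '' (K i : Set H) = (L i : Set W) := by
  have : ∀ i, CompleteSpace (K i) := fun i => (hK i).completeSpace_coe
  rw [ibap_iff_surjective_piOrthogonalProjection]
  constructor
  · intro hsurj
    let e := ContinuousLinearEquiv.ofBijective (piOrthogonalProjection (extendByOrthogonal K))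
      (LinearMap.ker_eq_bot.2 (injective_piOrthogonalProjection orthogonal_iSup_extendByOrthogonal))
      (LinearMap.range_eq_top.2 (surjective_piOrthogonalProjection_extendByOrthogonal hsurj))
    let C := PiLp.coordinateSubspace 𝕜 fun o => extendByOrthogonal K o
    refine ⟨PiLp 2 fun o => extendByOrthogonal K o, inferInstance, inferInstance, inferInstance,
      fun i => C (some i), fun i => PiLp.isClosed_coordinateSubspace _,
      fun i j hij => isOrtho_iff_inner_eq.1
        (PiLp.coordinateSubspace_isOrtho (Option.some_injective _ |>.ne hij)),
      e.adjoint.symm, fun i => ?_⟩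
    change e.adjoint.symm '' (extendByOrthogonal K (some i) : Set H) = C (some i)
    rw [← image_adjoint_coordinateSubspace e rfl, e.adjoint.symm_image_image]
  · rintro ⟨W, _, _, _, L, hL, hLorth, φ, hφ⟩
    have : ∀ i, CompleteSpace (L i) := fun i => (hL i).completeSpace_coe
    exact surjective_piOrthogonalProjection_of_mapsTo φ (fun i => hφ i ▸ Set.mapsTo_image φ _)
      (surjective_piOrthogonalProjection_of_isOrtho fun i j hij =>
        isOrtho_iff_inner_eq.2 (hLorth i j hij))
end

section
/- Let H be a Hilbert space and H_1, ..., H_n closed subspaces of H. The system H_1, ..., H_n possesses the inverse best approximation property if and only if there exist continuous linear operators E_1, ..., E_n : H → H such that each E_k is a projection (E_k² = E_k), E_i E_j = 0 for every pair i ≠ j, and Ran(E_k) = H_k for every k = 1, ..., n. -/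
open scoped InnerProduct
open ContinuousLinearMap Submodule Function

section Idempotents

variable {R M ι : Type*} [Semiring R] [TopologicalSpace M] [AddCommMonoid M] [Module R M]
  [ContinuousAdd M] {K : ι → Submodule R M} {E : ι → M →L[R] M}

theorem ContinuousLinearMap.orthogonalIdempotents_iff :
    OrthogonalIdempotents E ↔
      (∀ k x, E k (E k x) = E k x) ∧ ∀ i j, i ≠ j → ∀ x, E i (E j x) = 0 :=
  ⟨fun hE => ⟨fun k x => congr($(hE.idem k) x), fun _ _ hij x => congr($(hE.ortho hij) x)⟩,
    fun ⟨hidem, hortho⟩ => ⟨fun k => ext (hidem k), fun i j hij => ext (hortho i j hij)⟩⟩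

theorem OrthogonalIdempotents.comp_subtypeL_self (hE : OrthogonalIdempotents E)
    (hrange : ∀ k, Set.range (E k) = K k) (k : ι) : E k ∘L (K k).subtypeL = (K k).subtypeL := by
  ext ⟨v, hv⟩
  obtain ⟨w, rfl⟩ : v ∈ Set.range (E k) := (hrange k).symm ▸ hv
  exact congr($(hE.idem k) w)

theorem OrthogonalIdempotents.comp_subtypeL_of_ne (hE : OrthogonalIdempotents E)
    (hrange : ∀ k, Set.range (E k) = K k) {i k : ι} (hik : i ≠ k) : E k ∘L (K i).subtypeL = 0 := by
  ext ⟨v, hv⟩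
  obtain ⟨w, rfl⟩ : v ∈ Set.range (E i) := (hrange i).symm ▸ hv
  exact congr($(hE.ortho hik.symm) w)

end Idempotents

section RightInverse

variable {𝕜 H F : Type*} [RCLike 𝕜] [NormedAddCommGroup H] [InnerProductSpace 𝕜 H] [CompleteSpace H]
  [NormedAddCommGroup F] [NormedSpace 𝕜 F] [CompleteSpace F]

theorem ContinuousLinearMap.hasRightInverse_of_surjective {T : H →L[𝕜] F} (hT : Surjective T) :
    T.HasRightInverse := by
  have : CompleteSpace T.ker := T.isClosed_ker.completeSpace_coe
  let T' := T ∘L T.kerᗮ.subtypeL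
  have hinj : T'.ker = ⊥ := by
    refine (Submodule.eq_bot_iff _).2 fun x hx => Subtype.ext ?_
    exact (Submodule.orthogonal_disjoint T.ker).le_bot ⟨(hx : T x = 0), x.2⟩
  have hsurj : T'.range = ⊤ := by
    refine LinearMap.range_eq_top.2 fun y => ?_
    obtain ⟨x, rfl⟩ := hT y
    refine ⟨T.kerᗮ.orthogonalProjectionOnto x, ?_⟩
    show T (T.kerᗮ.starProjection x) = T x
    have hker : T (T.ker.starProjection x) = 0 := (T.ker.orthogonalProjectionOnto x).2
    rw [starProjection_orthogonal_val, map_sub, hker, sub_zero]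
  let e := ContinuousLinearEquiv.ofBijective T' hinj hsurj
  exact ⟨T.kerᗮ.subtypeL ∘L e.symm, e.apply_symm_apply⟩

end RightInverse

section BiorthogonalLift

variable {𝕜 H ι : Type*} [RCLike 𝕜] [NormedAddCommGroup H] [InnerProductSpace 𝕜 H]
  {K : ι → Submodule 𝕜 H} [∀ i, CompleteSpace (K i)]

variable (K) in
def IsBiorthogonalLift (B : ∀ k, K k →L[𝕜] H) : Prop :=
  (∀ k, (K k).orthogonalProjectionOnto ∘L B k = .id 𝕜 (K k)) ∧
    ∀ i k, i ≠ k → (K i).orthogonalProjectionOnto ∘L B k = 0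

theorem IsBiorthogonalLift.surjective [Fintype ι] {B : ∀ k, K k →L[𝕜] H}
    (hB : IsBiorthogonalLift K B) :
    Surjective (pi fun i => (K i).orthogonalProjectionOnto : H →L[𝕜] ∀ i, K i) := by
  intro w
  refine ⟨∑ k, B k (w k), funext fun i => ?_⟩
  rw [pi_apply, map_sum, Finset.sum_eq_single i]
  · exact congr($(hB.1 i) (w i))
  · exact fun k _ hk => congr($(hB.2 i k (Ne.symm hk)) (w k))
  · simp

variable [CompleteSpace H]

theorem adjoint_comp_subtypeL {i j : ι} (B : K i →L[𝕜] H) :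
    (B† ∘L (K j).subtypeL : K j →L[𝕜] K i) = ((K j).orthogonalProjectionOnto ∘L B)† := by
  rw [adjoint_comp, adjoint_orthogonalProjectionOnto]

theorem IsBiorthogonalLift.orthogonalIdempotents {B : ∀ k, K k →L[𝕜] H}
    (hB : IsBiorthogonalLift K B) : OrthogonalIdempotents fun k => (K k).subtypeL ∘L (B k)† where
  idem k := by
    change (K k).subtypeL ∘L ((B k)† ∘L (K k).subtypeL) ∘L (B k)† = (K k).subtypeL ∘L (B k)†
    rw [adjoint_comp_subtypeL, hB.1, adjoint_id, ContinuousLinearMap.id_comp]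
  ortho i j hij := by
    change (K i).subtypeL ∘L ((B i)† ∘L (K j).subtypeL) ∘L (B j)† = 0
    rw [adjoint_comp_subtypeL, hB.2 j i hij.symm, map_zero, zero_comp, comp_zero]

theorem IsBiorthogonalLift.range_subtypeL_comp_adjoint {B : ∀ k, K k →L[𝕜] H}
    (hB : IsBiorthogonalLift K B) (k : ι) :
    Set.range ((K k).subtypeL ∘L (B k)†) = K k := by
  refine Set.Subset.antisymm (Set.range_subset_iff.2 fun x => (((B k)†) x).2) fun v hv => ⟨v, ?_⟩
  have h := congr($(adjoint_comp_subtypeL (j := k) (B k)) ⟨v, hv⟩)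
  rw [hB.1, adjoint_id] at h
  exact congr(($h : H))

theorem OrthogonalIdempotents.isBiorthogonalLift {E : ι → H →L[𝕜] H} (hE : OrthogonalIdempotents E)
    (hrange : ∀ k, Set.range (E k) = K k) :
    IsBiorthogonalLift K fun k => (E k)† ∘L (K k).subtypeL := by
  have hcomp : ∀ i k, (K i).orthogonalProjectionOnto ∘L ((E k)† ∘L (K k).subtypeL) =
      (E k ∘L (K i).subtypeL)† ∘L (K k).subtypeL := fun i k => by
    rw [adjoint_comp, adjoint_subtypeL]; rfl
  refine ⟨fun k => ?_, fun i k hik => ?_⟩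
  · rw [hcomp, hE.comp_subtypeL_self hrange, adjoint_subtypeL]
    ext v
    simp
  · rw [hcomp, hE.comp_subtypeL_of_ne hrange hik, map_zero, zero_comp]

theorem exists_isBiorthogonalLift_of_surjective [Fintype ι]
    (h : Surjective (pi fun i => (K i).orthogonalProjectionOnto : H →L[𝕜] ∀ i, K i)) :
    ∃ B, IsBiorthogonalLift K B := by
  classical
  obtain ⟨S, hS⟩ := hasRightInverse_of_surjective h
  have hproj : ∀ w i, (K i).orthogonalProjectionOnto (S w) = w i := fun w i => congrFun (hS w) i
  refine ⟨fun k => S ∘L single 𝕜 (fun i => K i) k, fun k => ?_, fun i k hik => ?_⟩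
  · ext v
    simp [hproj]
  · ext v
    simp [hproj, Pi.single_eq_of_ne hik]

theorem surjective_pi_orthogonalProjectionOnto_iff [Fintype ι] :
    Surjective (pi fun i => (K i).orthogonalProjectionOnto : H →L[𝕜] ∀ i, K i) ↔
      ∃ E : ι → H →L[𝕜] H, OrthogonalIdempotents E ∧ ∀ k, Set.range (E k) = K k := by
  constructor
  · intro h
    obtain ⟨B, hB⟩ := exists_isBiorthogonalLift_of_surjective h
    exact ⟨_, hB.orthogonalIdempotents, hB.range_subtypeL_comp_adjoint⟩
  · rintro ⟨E, hE, hrange⟩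
    exact (hE.isBiorthogonalLift hrange).surjective

end BiorthogonalLift

theorem ibap_iff_surjective {𝕜 H : Type*} [RCLike 𝕜] [NormedAddCommGroup H]
    [InnerProductSpace 𝕜 H] [CompleteSpace H] {n : ℕ} {K : Fin n → Submodule 𝕜 H}
    (hK : ∀ i, IsClosed (K i : Set H)) [∀ i, CompleteSpace (K i)] :
    IBAP K hK ↔ Surjective (pi fun i => (K i).orthogonalProjectionOnto : H →L[𝕜] ∀ i, K i) := by
  refine ⟨fun h w => ?_, fun h x hx => ?_⟩
  · obtain ⟨y, hy⟩ := h (fun i => w i) fun i => (w i).2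
    exact ⟨y, funext fun i => Subtype.ext (hy i)⟩
  · obtain ⟨y, hy⟩ := h fun i => ⟨x i, hx i⟩
    exact ⟨y, fun i => congr(($(congrFun hy i) : H))⟩

/-- IBAP iff there are continuous linear projections
`E k` onto `K k` with `E i ∘ E j = 0` for `i ≠ j`. -/
theorem stmt_7 {𝕜 H : Type*} [RCLike 𝕜] [NormedAddCommGroup H]
    [InnerProductSpace 𝕜 H] [CompleteSpace H] {n : ℕ}
    (K : Fin n → Submodule 𝕜 H) (hK : ∀ i, IsClosed ((K i : Set H))) :
    IBAP K hK ↔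
      ∃ E : Fin n → H →L[𝕜] H,
        (∀ k, ∀ x : H, E k (E k x) = E k x) ∧
        (∀ i j, i ≠ j → ∀ x : H, E i (E j x) = 0) ∧
        (∀ k, Set.range (E k) = (K k : Set H)) := by
  have : ∀ i, CompleteSpace (K i) := fun i => (hK i).completeSpace_coe
  rw [ibap_iff_surjective, surjective_pi_orthogonalProjectionOnto_iff]
  exact exists_congr fun E => (and_congr_left' orthogonalIdempotents_iff).trans and_assoc
end

section
/- Let H be a Hilbert space, A : H → H a continuous linear operator, and λ_1, ..., λ_n pairwise distinct scalars. Then the system of eigenspaces H_k := ker(A − λ_k I), k = 1, ..., n, possesses the inverse best approximation property. -/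
open Polynomial Finset

namespace ContinuousLinearMap

variable {R M : Type*} [CommRing R] [TopologicalSpace M] [AddCommGroup M] [Module R M]
  [IsTopologicalAddGroup M] [ContinuousConstSMul R M]

theorem aeval_apply_of_apply_eq_smul {A : M →L[R] M} {μ : R} {x : M} (hx : A x = μ • x)
    (p : R[X]) : aeval A p x = p.eval μ • x := by
  let toLinearMapAlgHom : (M →L[R] M) →ₐ[R] (M →ₗ[R] M) :=
    { toLinearMapRingHom with commutes' := fun _ => rfl }
  exact congr($(aeval_algHom_apply toLinearMapAlgHom A p) x).symm.trans
    (Module.End.aeval_apply_of_mem_apply_eq_smul hx)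

theorem mem_ker_sub_smul_id_iff {A : M →L[R] M} {μ : R} {x : M} :
    x ∈ LinearMap.ker ((A - μ • ContinuousLinearMap.id R M : M →L[R] M) : M →ₗ[R] M) ↔
      A x = μ • x := by
  simp [sub_eq_zero]

end ContinuousLinearMap

theorem aeval_lagrangeBasis_apply_of_apply_eq_smul {F M ι : Type*} [Field F] [TopologicalSpace M]
    [AddCommGroup M] [Module F M] [IsTopologicalAddGroup M] [ContinuousConstSMul F M]
    [Fintype ι] [DecidableEq ι] {A : M →L[F] M} {lam : ι → F} (hlam : Function.Injective lam)
    (k : ι) {i : ι} {w : M} (hw : A w = lam i • w) :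
    aeval A (Lagrange.basis univ lam k) w = if k = i then w else 0 := by
  rw [ContinuousLinearMap.aeval_apply_of_apply_eq_smul hw]
  split_ifs with hki
  · rw [hki, Lagrange.eval_basis_self hlam.injOn (mem_univ i), one_smul]
  · rw [Lagrange.eval_basis_of_ne hki (mem_univ i), zero_smul]

section InnerProductSpace

variable {𝕜 H : Type*} [RCLike 𝕜] [NormedAddCommGroup H] [InnerProductSpace 𝕜 H]
  [CompleteSpace H]

theorem orthProjCLM_eq_of_forall_inner_eq {K : Submodule 𝕜 H} (hK : IsClosed (K : Set H))
    {x y : H} (hx : x ∈ K) (h : ∀ w ∈ K, inner 𝕜 y w = inner 𝕜 x w) :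
    orthProjCLM K hK y = x := by
  have : CompleteSpace K := hK.completeSpace_coe
  exact K.eq_starProjection_of_mem_of_inner_eq_zero hx fun w hw => by
    rw [inner_sub_left, h w hw, sub_self]

theorem IBAP.of_forall_apply_eq_ite {n : ℕ} (K : Fin n → Submodule 𝕜 H)
    (hK : ∀ i, IsClosed (K i : Set H)) (T : Fin n → H →L[𝕜] H)
    (hT : ∀ k i, ∀ w ∈ K i, T k w = if k = i then w else 0) : IBAP K hK := by
  intro x hx
  refine ⟨∑ k, ContinuousLinearMap.adjoint (T k) (x k), fun i => ?_⟩
  refine orthProjCLM_eq_of_forall_inner_eq (hK i) (hx i) fun w hw => ?_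
  simp only [sum_inner, ContinuousLinearMap.adjoint_inner_left, hT _ i w hw, apply_ite,
    inner_zero_right, sum_ite_eq', mem_univ, if_true]

end InnerProductSpace

/-- the eigenspaces of a continuous linear operator corresponding
to pairwise distinct scalars possess the IBAP. -/
theorem stmt_13 {𝕜 H : Type*} [RCLike 𝕜] [NormedAddCommGroup H]
    [InnerProductSpace 𝕜 H] [CompleteSpace H] {n : ℕ}
    (A : H →L[𝕜] H) (lam : Fin n → 𝕜)
    (hlam : ∀ i j, i ≠ j → lam i ≠ lam j) :
    IBAP (fun k => LinearMap.ker ((A - lam k • (ContinuousLinearMap.id 𝕜 H) : H →L[𝕜] H) : H →ₗ[𝕜] H))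
      (fun k => ContinuousLinearMap.isClosed_ker _) := by
  have hinj : Function.Injective lam := fun i j h => by_contra fun hij => hlam i j hij h
  refine IBAP.of_forall_apply_eq_ite _ _ (fun k => aeval A (Lagrange.basis univ lam k))
    fun k i w hw => ?_
  exact aeval_lagrangeBasis_apply_of_apply_eq_smul hinj k
    (ContinuousLinearMap.mem_ker_sub_smul_id_iff.mp hw)
end

section
/- Let H be a Hilbert space, H_1, ..., H_n closed subspaces of H whose system possesses the inverse best approximation property, and λ_1, ..., λ_n pairwise distinct scalars. Then there exists a continuous linear operator A : H → H such that H_k = ker(A − λ_k I) for every k = 1, ..., n. -/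
theorem pi_norm_sq_le_sum_norm_sq {ι : Type*} [Fintype ι] {E : ι → Type*}
    [∀ i, SeminormedAddCommGroup (E i)] (u : Π i, E i) : ‖u‖ ^ 2 ≤ ∑ i, ‖u i‖ ^ 2 := by
  have hS : 0 ≤ ∑ i, ‖u i‖ ^ 2 := Finset.sum_nonneg fun i _ => sq_nonneg _
  refine (Real.le_sqrt (norm_nonneg _) hS).1 ((pi_norm_le_iff_of_nonneg (Real.sqrt_nonneg _)).2
    fun i => (Real.le_sqrt (norm_nonneg _) hS).2 ?_)
  exact Finset.single_le_sum (f := fun j => ‖u j‖ ^ 2) (fun j _ => sq_nonneg _)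
    (Finset.mem_univ i)

namespace Submodule

variable {𝕜 H ι : Type*} [RCLike 𝕜] [NormedAddCommGroup H] [InnerProductSpace 𝕜 H]
  (K : ι → Submodule 𝕜 H)

noncomputable def piOrthogonalProjection [∀ i, CompleteSpace (K i)] : H →L[𝕜] Π i, K i :=
  ContinuousLinearMap.pi fun i => (K i).orthogonalProjectionOnto

noncomputable def piSum [Fintype ι] : (Π i, K i) →L[𝕜] H :=
  ∑ i, (K i).subtypeL ∘L ContinuousLinearMap.proj i

variable {K}

@[simp]
theorem piOrthogonalProjection_apply [∀ i, CompleteSpace (K i)] (y : H) (i : ι) :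
    piOrthogonalProjection K y i = (K i).orthogonalProjectionOnto y :=
  rfl

variable [Fintype ι]

@[simp]
theorem piSum_apply (u : Π i, K i) : piSum K u = ∑ i, (u i : H) := by
  simp [piSum]

theorem piSum_comp_single [DecidableEq ι] (k : ι) :
    (piSum K : (Π i, K i) →ₗ[𝕜] H) ∘ₗ LinearMap.single 𝕜 (fun i => K i) k = (K k).subtype := by
  ext v
  simp only [LinearMap.comp_apply, ContinuousLinearMap.coe_coe, piSum_apply]
  rw [Finset.sum_eq_single k (fun j _ hj => by simp [hj]) (by simp)]
  simp

theorem inner_piSum_left [∀ i, CompleteSpace (K i)] (u : Π i, K i) (y : H) :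
    inner 𝕜 (piSum K u) y = ∑ i, inner 𝕜 (u i) (piOrthogonalProjection K y i) := by
  simp [sum_inner]

theorem antilipschitz_piSum_of_surjective [CompleteSpace H] [∀ i, CompleteSpace (K i)]
    (h : Function.Surjective (piOrthogonalProjection K)) :
    ∃ C, AntilipschitzWith C (piSum K) := by
  obtain ⟨C, hC, hT⟩ := (piOrthogonalProjection K).exists_preimage_norm_le h
  refine ⟨C.toNNReal, (piSum K).antilipschitz_of_bound fun u => ?_⟩
  obtain ⟨y, hyu, hy⟩ := hT u
  have key : ‖u‖ ^ 2 ≤ ‖piSum K u‖ * (C * ‖u‖) :=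
    calc ‖u‖ ^ 2 ≤ ∑ i, ‖u i‖ ^ 2 := pi_norm_sq_le_sum_norm_sq u
      _ = RCLike.re (inner 𝕜 (piSum K u) y) := by
        rw [inner_piSum_left, hyu]
        simp
      _ ≤ ‖piSum K u‖ * ‖y‖ := (RCLike.re_le_norm _).trans (norm_inner_le_norm _ _)
      _ ≤ ‖piSum K u‖ * (C * ‖u‖) := by gcongr
  rw [Real.coe_toNNReal _ hC.le]
  rcases (norm_nonneg u).eq_or_lt with hu | hu
  · rw [← hu]
    positivity
  · nlinarith

end Submodule

theorem IBAP.surjective_piOrthogonalProjection {𝕜 H : Type*} [RCLike 𝕜] [NormedAddCommGroup H]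
    [InnerProductSpace 𝕜 H] [CompleteSpace H] {n : ℕ} {K : Fin n → Submodule 𝕜 H}
    {hK : ∀ i, IsClosed ((K i : Set H))} (h : IBAP K hK) [∀ i, CompleteSpace (K i)] :
    Function.Surjective (Submodule.piOrthogonalProjection K) := fun u => by
  obtain ⟨y, hy⟩ := h (fun i => u i) fun i => (u i).2
  exact ⟨y, funext fun i => Subtype.ext (hy i)⟩

theorem ContinuousLinearMap.exists_leftInverse_of_injective_of_isClosed_range
    {𝕜 E F : Type*} [RCLike 𝕜] [NormedAddCommGroup E] [NormedSpace 𝕜 E] [CompleteSpace E]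
    [NormedAddCommGroup F] [InnerProductSpace 𝕜 F] [CompleteSpace F]
    (f : E →L[𝕜] F) (hf : Function.Injective f) (hf' : IsClosed (Set.range f)) :
    ∃ g : F →L[𝕜] E, Function.LeftInverse g f := by
  have : CompleteSpace f.range := hf'.completeSpace_coe
  refine ⟨(f.equivRange hf hf').symm.toContinuousLinearMap ∘L
    f.range.orthogonalProjectionOnto, fun x => ?_⟩
  have hx : f.range.orthogonalProjectionOnto (f x) = ⟨f x, by simp⟩ :=
    Submodule.orthogonalProjectionOnto_mem_subspace_eq_self (K := f.range) ⟨f x, _⟩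
  simp [hx]

theorem LinearMap.ker_comp_add_smul_sub_comp_sub_smul {𝕜 V W : Type*} [Field 𝕜]
    [AddCommGroup V] [Module 𝕜 V] [AddCommGroup W] [Module 𝕜 W]
    (R : V →ₗ[𝕜] W) (L : W →ₗ[𝕜] V) (hLR : Function.LeftInverse L R) (D : V →ₗ[𝕜] V)
    {c μ : 𝕜} (hcμ : c ≠ μ) :
    ker (R ∘ₗ D ∘ₗ L + c • (id - R ∘ₗ L) - μ • id) = (ker (D - μ • id)).map R := by
  ext x
  simp only [mem_ker, Submodule.mem_map, sub_apply, add_apply, smul_apply, comp_apply, id_apply]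
  constructor
  · intro hx
    have hD : D (L x) = μ • L x := by
      simpa [hLR (D (L x)), hLR (L x), sub_eq_zero] using congrArg L hx
    have hx' : (c - μ) • (x - R (L x)) = 0 := by
      rw [← hx, hD, map_smul]
      module
    refine ⟨L x, by rw [hD, sub_self], ?_⟩
    rw [eq_comm, ← sub_eq_zero]
    exact (smul_eq_zero.1 hx').resolve_left (sub_ne_zero.2 hcμ)
  · rintro ⟨u, hu, rfl⟩
    rw [sub_eq_zero] at hu
    rw [hLR u, hu, map_smul]
    module

theorem LinearMap.ker_pi_smul_proj_sub_smul {𝕜 ι : Type*} [Field 𝕜] [DecidableEq ι]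
    {M : ι → Type*} [∀ i, AddCommGroup (M i)] [∀ i, Module 𝕜 (M i)]
    {lam : ι → 𝕜} (hlam : Function.Injective lam) (k : ι) :
    ker (pi (fun i => lam i • proj i) - lam k • id : (Π i, M i) →ₗ[𝕜] Π i, M i) =
      range (single 𝕜 M k) := by
  ext u
  simp only [mem_ker, mem_range, sub_apply, smul_apply, id_apply]
  constructor
  · intro hu
    refine ⟨u k, funext fun j => ?_⟩
    rcases eq_or_ne j k with rfl | hjk
    · simp
    · have : (lam j - lam k) • u j = 0 := by
        simpa [sub_smul, sub_eq_zero] using congrFun hu j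
      simp [hjk, (smul_eq_zero.1 this).resolve_left (sub_ne_zero.2 (hlam.ne hjk))]
  · rintro ⟨v, rfl⟩
    funext j
    rcases eq_or_ne j k with rfl | hjk
    · simp
    · simp [hjk]

/-- if a system of closed subspaces has the IBAP and
`lam 1, ..., lam n` are pairwise distinct scalars, then there is a continuous
linear operator `A` with `K k = ker (A - lam k • I)` for all `k`. -/
theorem stmt_14 {𝕜 H : Type*} [RCLike 𝕜] [NormedAddCommGroup H]
    [InnerProductSpace 𝕜 H] [CompleteSpace H] {n : ℕ}
    (K : Fin n → Submodule 𝕜 H) (hK : ∀ i, IsClosed ((K i : Set H)))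
    (hIBAP : IBAP K hK) (lam : Fin n → 𝕜)
    (hlam : ∀ i j, i ≠ j → lam i ≠ lam j) :
    ∃ A : H →L[𝕜] H, ∀ k,
      K k = LinearMap.ker ((A - lam k • (ContinuousLinearMap.id 𝕜 H)) : H →ₗ[𝕜] H) := by
  have (i : Fin n) : CompleteSpace (K i) := (hK i).completeSpace_coe
  set R := Submodule.piSum K
  obtain ⟨C, hR⟩ :=
    Submodule.antilipschitz_piSum_of_surjective hIBAP.surjective_piOrthogonalProjection
  obtain ⟨L, hLR⟩ := R.exists_leftInverse_of_injective_of_isClosed_range hR.injective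
    (hR.isClosed_range R.uniformContinuous)
  obtain ⟨c, hc⟩ : (Set.range lam)ᶜ.Nonempty := (Set.finite_range lam).infinite_compl.nonempty
  let D : (Π i, K i) →L[𝕜] Π i, K i :=
    ContinuousLinearMap.pi fun i => lam i • ContinuousLinearMap.proj i
  refine ⟨R ∘L D ∘L L + c • (ContinuousLinearMap.id 𝕜 H - R ∘L L), fun k => ?_⟩
  have hck : c ≠ lam k := fun h => hc ⟨k, h.symm⟩
  push_cast
  rw [LinearMap.ker_comp_add_smul_sub_comp_sub_smul _ _ hLR _ hck]
  have hD : (D : (Π i, K i) →ₗ[𝕜] Π i, K i) =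
      LinearMap.pi fun i => lam i • LinearMap.proj i := rfl
  classical
  rw [hD, LinearMap.ker_pi_smul_proj_sub_smul (fun i j h => not_imp_not.1 (hlam i j) h) k,
    ← LinearMap.range_comp, Submodule.piSum_comp_single, Submodule.range_subtype]
end

section
/- Let H be a Hilbert space and H_1, ..., H_n closed subspaces of H, not all zero, whose system possesses the inverse best approximation property, and let c := inf{ ‖x_1 + ... + x_n‖ / √(‖x_1‖² + ... + ‖x_n‖²) : x_k ∈ H_k, (x_1, ..., x_n) ≠ (0, ..., 0) }. If H_1', ..., H_n' are closed subspaces of H such that θ(H_1, H_1')² + ... + θ(H_n, H_n')² < c², where θ(M, N) = ‖P_M − P_N‖ is the opening between closed subspaces M and N (the operator norm of the difference of the orthogonal projections onto M and N), then the system H_1', ..., H_n' also possesses the inverse best approximation property. -/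
open ContinuousLinearMap

section Adjoint

variable {𝕜 E F : Type*} [RCLike 𝕜] [NormedAddCommGroup E] [InnerProductSpace 𝕜 E]
  [CompleteSpace E] [NormedAddCommGroup F] [InnerProductSpace 𝕜 F] [CompleteSpace F]

/-- `G = S† S` satisfies `⟪x, G x⟫ = ‖S x‖²`, so it is bounded below (closed range) and its range
has trivial orthogonal complement; hence `G`, and a fortiori `S†`, is onto. -/
theorem ContinuousLinearMap.surjective_adjoint_of_bound (S : E →L[𝕜] F) {m : ℝ} (hm : 0 < m)
    (hS : ∀ x, m * ‖x‖ ≤ ‖S x‖) : Function.Surjective (adjoint S) := by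
  set G := adjoint S ∘L S
  have inner_G : ∀ x, inner 𝕜 x (G x) = ((‖S x‖ ^ 2 : ℝ) : 𝕜) := fun x => by
    rw [comp_apply, adjoint_inner_right, inner_self_eq_norm_sq_to_K]
    norm_cast
  have hG : ∀ x, m ^ 2 * ‖x‖ ≤ ‖G x‖ := fun x => by
    have h := norm_inner_le_norm (𝕜 := 𝕜) x (G x)
    rw [inner_G, RCLike.norm_ofReal, abs_of_nonneg (by positivity)] at h
    rcases (norm_nonneg x).eq_or_lt with hx | hx
    · simp [← hx]
    · nlinarith [hS x, mul_nonneg hm.le hx.le]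
  have hclosed : IsClosed (G.range : Set E) := by
    rw [LinearMap.coe_range]
    refine (G.antilipschitz_of_bound (K := (m ^ 2)⁻¹.toNNReal) fun x => ?_).isClosed_range
      G.uniformContinuous
    rw [Real.coe_toNNReal _ (by positivity), inv_mul_eq_div, le_div_iff₀ (by positivity), mul_comm]
    exact hG x
  have : CompleteSpace G.range := hclosed.completeSpace_coe
  have hrange : G.range = ⊤ := by
    refine Submodule.orthogonal_eq_bot_iff.1 ((Submodule.eq_bot_iff _).2 fun u hu => ?_)
    have h0 := inner_eq_zero_symm.1 ((Submodule.mem_orthogonal _ u).1 hu (G u) ⟨u, rfl⟩)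
    rw [inner_G] at h0
    have hSu : ‖S u‖ = 0 := pow_eq_zero_iff two_ne_zero |>.1 (by exact_mod_cast h0)
    exact norm_le_zero_iff.1 (by nlinarith [hS u, norm_nonneg u])
  intro y
  obtain ⟨x, hx⟩ := LinearMap.range_eq_top.1 hrange y
  exact ⟨S x, hx⟩

end Adjoint

section Projections

variable {𝕜 H : Type*} [RCLike 𝕜] [NormedAddCommGroup H] [InnerProductSpace 𝕜 H] [CompleteSpace H]

theorem orthProjCLM_eq_starProjection (K : Submodule 𝕜 H) (hK : IsClosed (K : Set H))
    [CompleteSpace K] : orthProjCLM K hK = K.starProjection :=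
  rfl

/-- If `θ(M, N) < 1`, then `P_M` restricted to `N` is bounded below by `1 - θ(M, N)`, so its
adjoint, `P_N` restricted to `M`, is onto `N`. -/
theorem Submodule.exists_mem_starProjection_eq_of_norm_sub_lt_one (M N : Submodule 𝕜 H)
    [CompleteSpace M] [CompleteSpace N] (h : ‖M.starProjection - N.starProjection‖ < 1)
    {u : H} (hu : u ∈ N) : ∃ z ∈ M, N.starProjection z = u := by
  set S : N →L[𝕜] M := M.orthogonalProjectionOnto ∘L N.subtypeL
  have hS : ∀ w : N, (1 - ‖M.starProjection - N.starProjection‖) * ‖w‖ ≤ ‖S w‖ := fun w => by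
    have hdiff : (w : H) - S w = (N.starProjection - M.starProjection) w := by
      simp [S, N.starProjection_eq_self_iff.2 w.2]
    calc (1 - ‖M.starProjection - N.starProjection‖) * ‖w‖
        = ‖(w : H)‖ - ‖N.starProjection - M.starProjection‖ * ‖(w : H)‖ := by
          rw [norm_sub_rev, Submodule.coe_norm]
          ring
      _ ≤ ‖(w : H)‖ - ‖(w : H) - S w‖ := by grw [hdiff, le_opNorm]
      _ ≤ ‖S w‖ := by linarith [norm_sub_norm_le (w : H) (S w), Submodule.coe_norm (S w)]
  have hadj : adjoint S = N.orthogonalProjectionOnto ∘L M.subtypeL := by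
    rw [adjoint_comp, Submodule.adjoint_subtypeL, Submodule.adjoint_orthogonalProjectionOnto]
  obtain ⟨z, hz⟩ := S.surjective_adjoint_of_bound (sub_pos.2 h) hS ⟨u, hu⟩
  rw [hadj] at hz
  exact ⟨z, z.2, congrArg Subtype.val hz⟩

end Projections

section SumMap

variable {𝕜 H ι : Type*} [RCLike 𝕜] [NormedAddCommGroup H] [InnerProductSpace 𝕜 H] [Fintype ι]

theorem PiLp.inner_single_left_s16 [DecidableEq ι] {β : ι → Type*} [∀ i, NormedAddCommGroup (β i)]
    [∀ i, InnerProductSpace 𝕜 (β i)] (i : ι) (a : β i) (b : PiLp 2 β) :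
    inner 𝕜 (PiLp.single 2 i a) b = inner 𝕜 a (b i) := by
  rw [PiLp.inner_apply, Fintype.sum_eq_single i fun j hj => by simp [Pi.single_eq_of_ne hj]]
  simp

noncomputable def piLpSum (K : ι → Submodule 𝕜 H) : PiLp 2 (fun i => K i) →L[𝕜] H :=
  ∑ i, (K i).subtypeL ∘L PiLp.proj 2 (fun i => K i) i

theorem piLpSum_apply (K : ι → Submodule 𝕜 H) (x : PiLp 2 (fun i => K i)) :
    piLpSum K x = ∑ i, (x i : H) := by
  simp [piLpSum]

theorem adjoint_piLpSum_apply [CompleteSpace H] (K : ι → Submodule 𝕜 H)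
    [∀ i, CompleteSpace (K i)] (y : H) (i : ι) :
    adjoint (piLpSum K) y i = (K i).orthogonalProjectionOnto y := by
  classical
  refine ext_inner_left 𝕜 fun v => ?_
  rw [← PiLp.inner_single_left_s16 (β := fun i => K i), adjoint_inner_right, piLpSum_apply,
    Fintype.sum_eq_single i fun j hj => by simp [Pi.single_eq_of_ne hj], PiLp.single_eq_same,
    Submodule.inner_orthogonalProjectionOnto_eq_of_mem_left]

theorem IBAP.of_bound [CompleteSpace H] {n : ℕ} (K : Fin n → Submodule 𝕜 H)
    (hK : ∀ i, IsClosed (K i : Set H)) {m : ℝ} (hm : 0 < m)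
    (hbound : ∀ x : Fin n → H, (∀ i, x i ∈ K i) → m * √(∑ i, ‖x i‖ ^ 2) ≤ ‖∑ i, x i‖) :
    IBAP K hK := by
  have : ∀ i, CompleteSpace (K i) := fun i => (hK i).completeSpace_coe
  intro x hx
  have hS : ∀ v, m * ‖v‖ ≤ ‖piLpSum K v‖ := fun v => by
    rw [PiLp.norm_eq_of_L2, piLpSum_apply]
    exact hbound (fun i => v i) fun i => (v i).2
  obtain ⟨y, hy⟩ := (piLpSum K).surjective_adjoint_of_bound hm hS
    (WithLp.toLp 2 fun i => ⟨x i, hx i⟩)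
  refine ⟨y, fun i => ?_⟩
  rw [orthProjCLM_eq_starProjection, Submodule.starProjection_apply, ← adjoint_piLpSum_apply, hy]

end SumMap

section Constant

variable {𝕜 H ι : Type*} [RCLike 𝕜] [NormedAddCommGroup H] [InnerProductSpace 𝕜 H] [Fintype ι]

noncomputable def ibapConst (K : ι → Submodule 𝕜 H) : ℝ :=
  sInf {r : ℝ | ∃ x : ι → H, (∀ i, x i ∈ K i) ∧ x ≠ 0 ∧
    r = ‖∑ i, x i‖ / √(∑ i, ‖x i‖ ^ 2)}

theorem ibapConst_nonneg (K : ι → Submodule 𝕜 H) : 0 ≤ ibapConst K :=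
  Real.sInf_nonneg (by rintro _ ⟨x, -, -, rfl⟩; positivity)

theorem ibapConst_mul_le (K : ι → Submodule 𝕜 H) {x : ι → H} (hx : ∀ i, x i ∈ K i) :
    ibapConst K * √(∑ i, ‖x i‖ ^ 2) ≤ ‖∑ i, x i‖ := by
  rcases eq_or_ne x 0 with rfl | hx0
  · simp
  obtain ⟨j, hj⟩ := Function.ne_iff.1 hx0
  have hpos : 0 < √(∑ i, ‖x i‖ ^ 2) := Real.sqrt_pos.2 <|
    (pow_pos (norm_pos_iff.2 hj) 2).trans_le
      (Finset.single_le_sum (fun i _ => sq_nonneg ‖x i‖) (Finset.mem_univ j))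
  rw [← le_div_iff₀ hpos]
  exact csInf_le ⟨0, by rintro _ ⟨x, -, -, rfl⟩; positivity⟩ ⟨x, hx, hx0, rfl⟩

theorem ibapConst_le_one (K : ι → Submodule 𝕜 H) (hne : ∃ k, K k ≠ ⊥) : ibapConst K ≤ 1 := by
  classical
  obtain ⟨k, hk⟩ := hne
  obtain ⟨v, hvK, hv0⟩ := (K k).ne_bot_iff.1 hk
  have h := ibapConst_mul_le K (x := Pi.single k v) fun i => by
    rcases eq_or_ne i k with rfl | hik
    · simpa using hvK
    · simp [Pi.single_eq_of_ne hik]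
  rw [Fintype.sum_eq_single k fun i hik => by simp [Pi.single_eq_of_ne hik],
    Fintype.sum_eq_single k fun i hik => by simp [Pi.single_eq_of_ne hik]] at h
  simp only [Pi.single_eq_same, Real.sqrt_sq (norm_nonneg v)] at h
  exact (mul_le_iff_le_one_left (norm_pos_iff.2 hv0)).1 h

end Constant

section Perturbation

variable {𝕜 H ι : Type*} [RCLike 𝕜] [NormedAddCommGroup H] [InnerProductSpace 𝕜 H]
  [CompleteSpace H] [Fintype ι]

theorem mul_sqrt_le_norm_sum_of_opening (K K' : ι → Submodule 𝕜 H) [∀ i, CompleteSpace (K i)]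
    [∀ i, CompleteSpace (K' i)] {c : ℝ}
    (hK : ∀ z : ι → H, (∀ i, z i ∈ K i) → c * √(∑ i, ‖z i‖ ^ 2) ≤ ‖∑ i, z i‖)
    (hopen : ∀ i, ‖(K i).starProjection - (K' i).starProjection‖ < 1)
    {x : ι → H} (hx : ∀ i, x i ∈ K' i) :
    (c - √(∑ i, ‖(K i).starProjection - (K' i).starProjection‖ ^ 2)) * √(∑ i, ‖x i‖ ^ 2)
      ≤ ‖∑ i, x i‖ := by
  set t := fun i => ‖(K i).starProjection - (K' i).starProjection‖
  choose z hzK hzx using fun i =>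
    (K i).exists_mem_starProjection_eq_of_norm_sub_lt_one (K' i) (hopen i) (hx i)
  have hxz : √(∑ i, ‖x i‖ ^ 2) ≤ √(∑ i, ‖z i‖ ^ 2) := by
    refine Real.sqrt_le_sqrt (Finset.sum_le_sum fun i _ => ?_)
    rw [← hzx i]
    exact pow_le_pow_left₀ (norm_nonneg _) (Submodule.norm_starProjection_apply_le _ _) 2
  have hdiff : ‖∑ i, (z i - x i)‖ ≤ √(∑ i, t i ^ 2) * √(∑ i, ‖z i‖ ^ 2) := by
    refine (norm_sum_le _ _).trans ((Finset.sum_le_sum fun i _ => ?_).trans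
      (Real.sum_mul_le_sqrt_mul_sqrt _ t fun i => ‖z i‖))
    have hzi : z i - x i = ((K i).starProjection - (K' i).starProjection) (z i) := by
      rw [sub_apply, (K i).starProjection_eq_self_iff.2 (hzK i), hzx i]
    rw [hzi]
    exact le_opNorm _ _
  have hsum : ∑ i, z i - ∑ i, (z i - x i) = ∑ i, x i := by
    rw [Finset.sum_sub_distrib, sub_sub_cancel]
  have hlow := (norm_sub_norm_le (∑ i, z i) (∑ i, (z i - x i))).trans_eq (congrArg _ hsum)
  rcases le_or_gt (c - √(∑ i, t i ^ 2)) 0 with hneg | hpos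
  · exact (mul_nonpos_of_nonpos_of_nonneg hneg (Real.sqrt_nonneg _)).trans (norm_nonneg _)
  · nlinarith [hK z hzK, mul_le_mul_of_nonneg_left hxz hpos.le]

end Perturbation

theorem stmt_16_general {𝕜 H : Type*} [RCLike 𝕜] [NormedAddCommGroup H]
    [InnerProductSpace 𝕜 H] [CompleteSpace H] {n : ℕ}
    (K K' : Fin n → Submodule 𝕜 H)
    (hK : ∀ i, IsClosed ((K i : Set H))) (hK' : ∀ i, IsClosed ((K' i : Set H)))
    (hne : ∃ k, K k ≠ ⊥)
    (c : ℝ)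
    (hc : c = sInf {r : ℝ | ∃ x : Fin n → H, (∀ i, x i ∈ K i) ∧ x ≠ 0 ∧
      r = ‖∑ i, x i‖ / Real.sqrt (∑ i, ‖x i‖ ^ 2)})
    (hθ : ∑ i, ‖orthProjCLM (K i) (hK i) - orthProjCLM (K' i) (hK' i)‖ ^ 2
      < c ^ 2) :
    IBAP K' hK' := by
  have hKc : ∀ i, CompleteSpace (K i) := fun i => (hK i).completeSpace_coe
  have hK'c : ∀ i, CompleteSpace (K' i) := fun i => (hK' i).completeSpace_coe
  simp only [orthProjCLM_eq_starProjection] at hθ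
  set θ := √(∑ i, ‖(K i).starProjection - (K' i).starProjection‖ ^ 2)
  replace hc : c = ibapConst K := hc
  have hθc : θ < c := by
    rw [← Real.sqrt_sq (hc ▸ ibapConst_nonneg K : 0 ≤ c)]
    exact Real.sqrt_lt_sqrt (by positivity) hθ
  have hopen : ∀ i, ‖(K i).starProjection - (K' i).starProjection‖ < 1 := fun i =>
    calc ‖(K i).starProjection - (K' i).starProjection‖ ≤ θ :=
          Real.le_sqrt_of_sq_le <| Finset.single_le_sum
            (f := fun j => ‖(K j).starProjection - (K' j).starProjection‖ ^ 2)
            (fun j _ => by positivity) (Finset.mem_univ i)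
      _ < c := hθc
      _ ≤ 1 := hc ▸ ibapConst_le_one K hne
  exact IBAP.of_bound K' hK' (sub_pos.2 hθc) fun x hx =>
    mul_sqrt_le_norm_sum_of_opening K K' (fun z hz => hc ▸ ibapConst_mul_le K hz) hopen hx

/-- stability of the IBAP. If the system `K` (not all of whose
members are zero) has the IBAP with constant
`c = inf ‖x 1 + ... + x n‖ / √(‖x 1‖² + ... + ‖x n‖²)`, and the openings
`θ(K i, K' i) = ‖P_{K i} - P_{K' i}‖` satisfy `Σ θ(K i, K' i)² < c²`, then the
system `K'` also has the IBAP. -/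
theorem stmt_16 {𝕜 H : Type*} [RCLike 𝕜] [NormedAddCommGroup H]
    [InnerProductSpace 𝕜 H] [CompleteSpace H] {n : ℕ}
    (K K' : Fin n → Submodule 𝕜 H)
    (hK : ∀ i, IsClosed ((K i : Set H))) (hK' : ∀ i, IsClosed ((K' i : Set H)))
    (hne : ∃ k, K k ≠ ⊥)
    (hIBAP : IBAP K hK)
    (c : ℝ)
    (hc : c = sInf {r : ℝ | ∃ x : Fin n → H, (∀ i, x i ∈ K i) ∧ x ≠ 0 ∧
      r = ‖∑ i, x i‖ / Real.sqrt (∑ i, ‖x i‖ ^ 2)})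
    (hθ : ∑ i, ‖orthProjCLM (K i) (hK i) - orthProjCLM (K' i) (hK' i)‖ ^ 2
      < c ^ 2) :
    IBAP K' hK' :=
  stmt_16_general K K' hK hK' hne c hc hθ
end

section
/- Let {p_k : k ≥ 1} be a sequence of positive real numbers such that Σ_{k=1}^∞ p_k converges, and set r_k := Σ_{j=k}^∞ p_j. Then the following are equivalent: (1) sup{ r_{k+1}/r_k : k ≥ 1 } < 1; (2) the sequence {r_k / p_k : k ≥ 1} is bounded; (3) the sequence {p_{k+1}/p_k : k ≥ 1} is bounded and there exists a natural number N ≥ 1 such that sup{ p_{k+N}/p_k : k ≥ 1 } < 1. -/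
/-!
Write `r k = ∑_{j ≥ k} p j`, so that `r k = p k + r (k + 1)`. Hence `r (k + 1) ≤ q r k` with
`q < 1` is the same as `r k ≤ (1 - q)⁻¹ p k`, which gives (1) ⇔ (2). Under (2) the tails decay
geometrically, so `p (k + N) ≤ r (k + N) ≤ q ^ N r k ≤ q ^ N C p k` and (3) follows for large `N`.
Conversely, under (3) the termwise bound `p (j + N) ≤ a p j` gives `r (k + N) ≤ a r k`, so
`r k = ∑_{i < N} p (k + i) + r (k + N) ≤ (∑_{i < N} C ^ i) p k + a r k`, which is (2).
-/

open Finset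

noncomputable def tailSum (p : ℕ → ℝ) (k : ℕ) : ℝ := ∑' j, p (k + j)

section TailSum

variable {p : ℕ → ℝ}

lemma Summable.comp_add_left (hs : Summable p) (k : ℕ) : Summable fun j => p (k + j) := by
  simpa only [add_comm k] using (summable_nat_add_iff k).2 hs

lemma sum_range_add_tailSum (hs : Summable p) (k N : ℕ) :
    ∑ i ∈ range N, p (k + i) + tailSum p (k + N) = tailSum p k := by
  have hshift : tailSum p (k + N) = ∑' i, p (k + (i + N)) :=
    tsum_congr fun i => by rw [add_comm i, add_assoc]
  rw [hshift]
  exact (hs.comp_add_left k).sum_add_tsum_nat_add N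

lemma tailSum_eq_add_tailSum_succ (hs : Summable p) (k : ℕ) :
    tailSum p k = p k + tailSum p (k + 1) := by
  simpa using (sum_range_add_tailSum hs k 1).symm

lemma tailSum_nonneg (hp : ∀ k, 0 ≤ p k) (k : ℕ) : 0 ≤ tailSum p k :=
  tsum_nonneg fun j => hp (k + j)

lemma tailSum_pos (hp : ∀ k, 0 < p k) (hs : Summable p) (k : ℕ) : 0 < tailSum p k :=
  (hs.comp_add_left k).tsum_pos (fun j => (hp (k + j)).le) 0 (hp _)

lemma le_tailSum (hp : ∀ k, 0 ≤ p k) (hs : Summable p) (k : ℕ) : p k ≤ tailSum p k := by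
  rw [tailSum_eq_add_tailSum_succ hs k]
  linarith [tailSum_nonneg hp (k + 1)]

lemma tailSum_succ_le (hp : ∀ k, 0 ≤ p k) (hs : Summable p) (k : ℕ) :
    tailSum p (k + 1) ≤ tailSum p k := by
  rw [tailSum_eq_add_tailSum_succ hs k]
  linarith [hp k]

lemma tailSum_add_le_mul {N : ℕ} {a : ℝ} (hs : Summable p) (h : ∀ k, p (k + N) ≤ a * p k)
    (k : ℕ) : tailSum p (k + N) ≤ a * tailSum p k := by
  have hshift : tailSum p (k + N) = ∑' j, p (k + j + N) :=
    tsum_congr fun j => by rw [add_right_comm]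
  rw [hshift, tailSum, ← tsum_mul_left]
  refine Summable.tsum_le_tsum (fun j => h (k + j)) ?_ ((hs.comp_add_left k).mul_left a)
  simpa only [add_right_comm k] using hs.comp_add_left (k + N)

end TailSum

section Ratios

variable {p : ℕ → ℝ} (hp : ∀ k, 0 < p k) (hs : Summable p)
include hp hs

lemma bddAbove_tailSum_ratio :
    BddAbove (Set.range fun k => tailSum p (k + 1) / tailSum p k) :=
  ⟨1, by
    rintro _ ⟨k, rfl⟩
    exact div_le_one_of_le₀ (tailSum_succ_le (fun k => (hp k).le) hs k)
      (tailSum_pos hp hs k).le⟩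

lemma tailSum_div_le_of_iSup_lt (h : (⨆ k, tailSum p (k + 1) / tailSum p k) < 1) (k : ℕ) :
    tailSum p k / p k ≤ (1 - ⨆ k, tailSum p (k + 1) / tailSum p k)⁻¹ := by
  set q := ⨆ k, tailSum p (k + 1) / tailSum p k
  have hstep : tailSum p (k + 1) ≤ q * tailSum p k :=
    (div_le_iff₀ (tailSum_pos hp hs k)).1 (le_ciSup (bddAbove_tailSum_ratio hp hs) k)
  have hk := tailSum_eq_add_tailSum_succ hs k
  rw [div_le_iff₀ (hp k), inv_mul_eq_div, le_div_iff₀ (by linarith)]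
  linarith

lemma one_le_of_tailSum_div_le {C : ℝ} (hC : ∀ k, tailSum p k / p k ≤ C) : 1 ≤ C :=
  ((one_le_div (hp 0)).2 (le_tailSum (fun k => (hp k).le) hs 0)).trans (hC 0)

lemma tailSum_succ_le_of_tailSum_div_le {C : ℝ} (hC : ∀ k, tailSum p k / p k ≤ C) (k : ℕ) :
    tailSum p (k + 1) ≤ (1 - C⁻¹) * tailSum p k := by
  have hC0 : 0 < C := zero_lt_one.trans_le (one_le_of_tailSum_div_le hp hs hC)
  have hpk : C⁻¹ * tailSum p k ≤ p k := by
    rw [inv_mul_le_iff₀ hC0]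
    exact (div_le_iff₀ (hp k)).1 (hC k)
  linarith [tailSum_eq_add_tailSum_succ hs k]

lemma ratio_succ_le_of_tailSum_div_le {C : ℝ} (hC : ∀ k, tailSum p k / p k ≤ C) (k : ℕ) :
    p (k + 1) / p k ≤ C := by
  rw [div_le_iff₀ (hp k)]
  calc p (k + 1) ≤ tailSum p (k + 1) := le_tailSum (fun k => (hp k).le) hs (k + 1)
    _ ≤ tailSum p k := tailSum_succ_le (fun k => (hp k).le) hs k
    _ ≤ C * p k := (div_le_iff₀ (hp k)).1 (hC k)

lemma iSup_tailSum_ratio_lt_one {C : ℝ} (hC : ∀ k, tailSum p k / p k ≤ C) :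
    (⨆ k, tailSum p (k + 1) / tailSum p k) < 1 := by
  have hC0 : 0 < C := zero_lt_one.trans_le (one_le_of_tailSum_div_le hp hs hC)
  refine (ciSup_le fun k => ?_).trans_lt (sub_lt_self 1 (inv_pos.2 hC0))
  rw [div_le_iff₀ (tailSum_pos hp hs k)]
  exact tailSum_succ_le_of_tailSum_div_le hp hs hC k

lemma exists_iSup_ratio_lt_one_of_tailSum_div_le {C : ℝ} (hC : ∀ k, tailSum p k / p k ≤ C) :
    ∃ N : ℕ, 1 ≤ N ∧ (⨆ k, p (k + N) / p k) < 1 := by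
  have hC1 := one_le_of_tailSum_div_le hp hs hC
  have hC0 : 0 < C := zero_lt_one.trans_le hC1
  set q := 1 - C⁻¹
  have hq0 : 0 ≤ q := sub_nonneg.2 (inv_le_one_of_one_le₀ hC1)
  have hq1 : q < 1 := sub_lt_self 1 (inv_pos.2 hC0)
  obtain ⟨N, hqN, hN1⟩ := (((tendsto_pow_atTop_nhds_zero_of_lt_one hq0 hq1).eventually
    (gt_mem_nhds (inv_pos.2 hC0))).and (Filter.eventually_ge_atTop 1)).exists
  have hdecay : ∀ k, tailSum p (k + N) ≤ q ^ N * tailSum p k := fun k =>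
    le_geom (u := fun n => tailSum p (k + n)) hq0 N fun n _ =>
      tailSum_succ_le_of_tailSum_div_le hp hs hC (k + n)
  have hqNC : q ^ N * C < 1 :=
    calc q ^ N * C < C⁻¹ * C := mul_lt_mul_of_pos_right hqN hC0
      _ = 1 := inv_mul_cancel₀ hC0.ne'
  refine ⟨N, hN1, (ciSup_le fun k => ?_).trans_lt hqNC⟩
  rw [div_le_iff₀ (hp k)]
  calc p (k + N) ≤ tailSum p (k + N) := le_tailSum (fun k => (hp k).le) hs _
    _ ≤ q ^ N * tailSum p k := hdecay k
    _ ≤ q ^ N * (C * p k) := by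
        gcongr
        exact (div_le_iff₀ (hp k)).1 (hC k)
    _ = q ^ N * C * p k := by ring

lemma tailSum_div_le_of_iSup_ratio_lt_one {C : ℝ} {N : ℕ} (hC : ∀ k, p (k + 1) / p k ≤ C)
    (hN : (⨆ k, p (k + N) / p k) < 1) (k : ℕ) :
    tailSum p k / p k ≤ (∑ i ∈ range N, C ^ i) / (1 - ⨆ k, p (k + N) / p k) := by
  set a := ⨆ k, p (k + N) / p k
  have hC0 : 0 ≤ C := (div_pos (hp 1) (hp 0)).le.trans (hC 0)
  have hgrowth : ∀ k i, p (k + i) ≤ C ^ i * p k := fun k i =>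
    le_geom (u := fun n => p (k + n)) hC0 i fun n _ =>
      (div_le_iff₀ (hp (k + n))).1 (hC (k + n))
  have hbdd : BddAbove (Set.range fun k => p (k + N) / p k) :=
    ⟨C ^ N, by rintro _ ⟨k, rfl⟩; exact (div_le_iff₀ (hp k)).2 (hgrowth k N)⟩
  have hstepN : ∀ k, p (k + N) ≤ a * p k := fun k =>
    (div_le_iff₀ (hp k)).1 (le_ciSup hbdd k)
  have hhead : ∑ i ∈ range N, p (k + i) ≤ (∑ i ∈ range N, C ^ i) * p k := by
    rw [sum_mul]
    exact sum_le_sum fun i _ => hgrowth k i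
  have htail := tailSum_add_le_mul hs hstepN k
  have hsplit := sum_range_add_tailSum hs k N
  rw [div_le_iff₀ (hp k), div_mul_eq_mul_div, le_div_iff₀ (sub_pos.2 hN)]
  linarith

end Ratios

/-- for a sequence of positive reals `p` with convergent sum and
tails `r k = Σ_{j ≥ k} p j`, the following are equivalent:
(1) `sup_k r (k+1) / r k < 1`;
(2) the sequence `r k / p k` is bounded;
(3) the sequence `p (k+1) / p k` is bounded and there is `N ≥ 1` with
`sup_k p (k+N) / p k < 1`.
(Here the sequence is indexed by `ℕ` starting from `0`.) -/
theorem stmt_18 (p : ℕ → ℝ) (hp : ∀ k, 0 < p k) (hs : Summable p) :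
    List.TFAE [
      (⨆ k : ℕ, (∑' j : ℕ, p (k + 1 + j)) / (∑' j : ℕ, p (k + j))) < 1,
      ∃ C : ℝ, ∀ k, (∑' j : ℕ, p (k + j)) / p k ≤ C,
      (∃ C : ℝ, ∀ k, p (k + 1) / p k ≤ C) ∧
        ∃ N : ℕ, 1 ≤ N ∧ (⨆ k : ℕ, p (k + N) / p k) < 1 ] := by
  change List.TFAE [
      (⨆ k, tailSum p (k + 1) / tailSum p k) < 1,
      ∃ C : ℝ, ∀ k, tailSum p k / p k ≤ C,
      (∃ C : ℝ, ∀ k, p (k + 1) / p k ≤ C) ∧ ∃ N : ℕ, 1 ≤ N ∧ (⨆ k, p (k + N) / p k) < 1]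
  tfae_have 1 → 2 := fun h => ⟨_, tailSum_div_le_of_iSup_lt hp hs h⟩
  tfae_have 2 → 1 := fun ⟨_, hC⟩ => iSup_tailSum_ratio_lt_one hp hs hC
  tfae_have 2 → 3 := fun ⟨C, hC⟩ =>
    ⟨⟨C, ratio_succ_le_of_tailSum_div_le hp hs hC⟩,
      exists_iSup_ratio_lt_one_of_tailSum_div_le hp hs hC⟩
  tfae_have 3 → 2 := fun ⟨⟨_, hC⟩, _, _, hN⟩ =>
    ⟨_, tailSum_div_le_of_iSup_ratio_lt_one hp hs hC hN⟩
  tfae_finish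
end

section
/- Let (Ω, 𝓕, μ) be a probability space and 𝓕_1, ..., 𝓕_n sub-σ-algebras of 𝓕. Suppose there exists α > 0 such that μ(A_1 ∩ ... ∩ A_n) ≥ α μ(A_1)···μ(A_n) for arbitrary A_1 ∈ 𝓕_1, ..., A_n ∈ 𝓕_n. Then the collection 𝓕_1, ..., 𝓕_n possesses the inverse marginal property: for arbitrary random variables ξ_1, ..., ξ_n such that ξ_k is 𝓕_k-measurable with E|ξ_k|² < ∞ for each k, and Eξ_1 = Eξ_2 = ... = Eξ_n, there exists a random variable ξ with E|ξ|² < ∞ and E(ξ | 𝓕_k) = ξ_k almost everywhere for all k = 1, ..., n. -/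
/-!
Put the probability spaces `(Ω, 𝓕_k, μ)` side by side and compare their product measure `π` with
the law of the diagonal `ω ↦ (ω, …, ω)`. The hypothesis says that `α π` is dominated by the
diagonal law on measurable boxes, hence on all measurable sets, so `π` has a density bounded by
`1 / α` with respect to it. Pulling this density back along the diagonal gives a measure
`ν ≤ α⁻¹ μ` on `Ω` under which `𝓕_1, …, 𝓕_n` are independent with the same marginals as under
`μ`. With `c` the common mean, `ξ₀ = (dν/dμ) (ξ_1 + ⋯ + ξ_n - (n - 1) c)` works: for `A ∈ 𝓕_k`,
`∫_A ξ₀ dμ = ∫_A (∑ ξ_l - (n - 1) c) dν`, and independence turns each term with `l ≠ k` into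
`μ(A) c`.
-/

open MeasureTheory ProbabilityTheory Set MeasurableSpace
open scoped ENNReal symmDiff

namespace MeasureTheory

theorem Measure.le_of_forall_le_of_isSetSemiring {α : Type*} [mα : MeasurableSpace α]
    {ρ ν : Measure α} [IsFiniteMeasure ρ] [IsFiniteMeasure ν] {C : Set (Set α)}
    (hC : IsSetSemiring C)
    (hgen : mα = generateFrom C) (huniv : univ ∈ C) (h : ∀ s ∈ C, ρ s ≤ ν s) : ρ ≤ ν := by
  have hring : ∀ t ∈ supClosure C, ρ t ≤ ν t := by
    intro t ht
    obtain ⟨P, hP⟩ := hC.mem_supClosure_iff.1 ht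
    have hmeas : ∀ p ∈ P.parts, MeasurableSet p := fun p hp =>
      hgen ▸ measurableSet_generateFrom (hP hp)
    rw [← P.sup_parts, Finset.sup_set_eq_biUnion,
      measure_biUnion_finset P.disjoint hmeas, measure_biUnion_finset P.disjoint hmeas]
    exact Finset.sum_le_sum fun p hp => h p (hP hp)
  refine Measure.le_iff.2 fun s hs => ENNReal.le_of_forall_pos_le_add fun ε hε _ => ?_
  obtain ⟨t, ht, hts⟩ := exists_measure_symmDiff_lt_of_generateFrom_isSetSemiring (μ := ρ + ν)
    hC ⟨{univ}, countable_singleton _, singleton_subset_iff.2 huniv, by simp⟩ hgen hs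
    (ENNReal.coe_pos.2 hε)
  calc ρ s ≤ ρ t + ρ (t ∆ s) := tsub_le_iff_left.1 (symmDiff_comm s t ▸ le_measure_symmDiff)
    _ ≤ ν t + ρ (t ∆ s) := by gcongr ?_ + _; exact hring t ht
    _ ≤ ν s + ν (t ∆ s) + ρ (t ∆ s) := by gcongr; exact tsub_le_iff_left.1 le_measure_symmDiff
    _ = ν s + (ρ + ν) (t ∆ s) := by rw [Measure.add_apply]; ring
    _ ≤ ν s + ε := by gcongr

section Boxes

variable {ι : Type*} [Fintype ι] {X : ι → Type*}

section Pieces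

variable [DecidableEq ι]

def piSdiffPiece (a b : ∀ i, Set (X i)) (J : Finset ι) : Set (∀ i, X i) :=
  univ.pi fun j => if j ∈ J then a j \ b j else a j ∩ b j

theorem disjoint_piSdiffPiece (a b : ∀ i, Set (X i)) {J K : Finset ι} (hJK : J ≠ K) :
    Disjoint (piSdiffPiece a b J) (piSdiffPiece a b K) := by
  obtain ⟨j, hj⟩ : ∃ j, ¬(j ∈ J ↔ j ∈ K) := by
    by_contra! h
    exact hJK (Finset.ext h)
  refine Set.disjoint_left.2 fun x hxJ hxK => ?_
  have hJ := hxJ j (mem_univ j)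
  have hK := hxK j (mem_univ j)
  by_cases hjJ : j ∈ J <;> by_cases hjK : j ∈ K <;> simp_all

theorem pi_sdiff_pi_eq_iUnion_piSdiffPiece (a b : ∀ i, Set (X i)) :
    univ.pi a \ univ.pi b = ⋃ J ∈ Finset.univ.erase ∅, piSdiffPiece a b J := by
  classical
  ext x
  simp only [mem_sdiff, mem_univ_pi, mem_iUnion, Finset.mem_erase, Finset.mem_univ, and_true,
    piSdiffPiece]
  constructor
  · rintro ⟨hxa, hxb⟩
    obtain ⟨i, hi⟩ := not_forall.1 hxb
    refine ⟨Finset.univ.filter fun j => x j ∉ b j, Finset.ne_empty_of_mem (by simpa using hi),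
      fun j => ?_⟩
    by_cases hj : x j ∈ b j <;> simp [hj, hxa j]
  · rintro ⟨J, hJ, hx⟩
    obtain ⟨j, hj⟩ := Finset.nonempty_iff_ne_empty.2 hJ
    refine ⟨fun i => ?_, fun hxb => ?_⟩
    · have := hx i
      split_ifs at this <;> exact this.1
    · have := hx j
      rw [if_pos hj] at this
      exact this.2 (hxb j)

end Pieces

variable [∀ i, MeasurableSpace (X i)]

theorem isSetSemiring_insert_empty_pi :
    IsSetSemiring (insert ∅ (pi univ '' pi univ fun i => {s : Set (X i) | MeasurableSet s})) where
  empty_mem := mem_insert _ _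
  inter_mem := by
    rintro s (rfl | ⟨a, ha, rfl⟩) t (rfl | ⟨b, hb, rfl⟩)
    · simp
    · simp
    · simp
    · refine Or.inr ⟨fun i => a i ∩ b i, fun i _ => (ha i trivial).inter (hb i trivial), ?_⟩
      exact pi_inter_distrib
  sdiff_eq_sUnion' := by
    classical
    rintro s (rfl | ⟨a, ha, rfl⟩) t (rfl | ⟨b, hb, rfl⟩)
    · exact ⟨∅, by simp, by simp, by simp⟩
    · exact ⟨∅, by simp, by simp, by simp⟩
    · refine ⟨{univ.pi a}, ?_, by simp, by simp⟩
      rw [Finset.coe_singleton, singleton_subset_iff]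
      exact Or.inr ⟨a, ha, rfl⟩
    · refine ⟨(Finset.univ.erase ∅).image (piSdiffPiece a b), ?_, ?_, ?_⟩
      · simp only [Finset.coe_image]
        rintro _ ⟨J, -, rfl⟩
        refine Or.inr ⟨_, fun j _ => ?_, rfl⟩
        split_ifs
        exacts [(ha j trivial).diff (hb j trivial), (ha j trivial).inter (hb j trivial)]
      · simp only [Finset.coe_image]
        rintro _ ⟨J, -, rfl⟩ _ ⟨K, -, rfl⟩ hne
        exact disjoint_piSdiffPiece a b fun h => hne (congrArg _ h)
      · rw [pi_sdiff_pi_eq_iUnion_piSdiffPiece, Finset.coe_image, sUnion_image]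
        simp

theorem Measure.le_of_forall_pi_le {ρ ν : Measure (∀ i, X i)} [IsFiniteMeasure ρ]
    [IsFiniteMeasure ν]
    (h : ∀ A : ∀ i, Set (X i), (∀ i, MeasurableSet (A i)) → ρ (univ.pi A) ≤ ν (univ.pi A)) :
    ρ ≤ ν := by
  refine Measure.le_of_forall_le_of_isSetSemiring isSetSemiring_insert_empty_pi
    ((generateFrom_insert_empty _).trans generateFrom_pi).symm
    (mem_insert_of_mem _ ⟨fun _ => univ, fun _ _ => MeasurableSet.univ, Set.pi_univ _⟩) ?_
  rintro s (rfl | ⟨A, hA, rfl⟩)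
  · simp
  · exact h A fun i => hA i trivial

end Boxes

theorem Measure.rnDeriv_le_of_le_smul {α : Type*} [MeasurableSpace α] {ν μ : Measure α}
    [SigmaFinite μ] {c : ℝ≥0∞} (h : ν ≤ c • μ) : ν.rnDeriv μ ≤ᵐ[μ] fun _ => c :=
  ae_le_of_forall_setLIntegral_le_of_sigmaFinite (Measure.measurable_rnDeriv ν μ)
    fun s _ _ => by
      rw [setLIntegral_const, ← smul_eq_mul, ← Measure.smul_apply]
      exact (Measure.setLIntegral_rnDeriv_le s).trans (h s)

theorem exists_le_smul_map_eq {α β : Type*} [MeasurableSpace α] [MeasurableSpace β]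
    {μ : Measure α} [IsFiniteMeasure μ] {f : α → β} (hf : Measurable f) {P : Measure β}
    [SigmaFinite P] {c : ℝ≥0∞} (hP : P ≤ c • μ.map f) :
    ∃ ν : Measure α, ν ≤ c • μ ∧ ν.map f = P := by
  set g := P.rnDeriv (μ.map f)
  refine ⟨μ.withDensity (g ∘ f), ?_, ?_⟩
  · calc μ.withDensity (g ∘ f) ≤ μ.withDensity fun _ => c :=
          withDensity_mono (ae_of_ae_map hf.aemeasurable (Measure.rnDeriv_le_of_le_smul hP))
      _ = c • μ := withDensity_const c
  · ext s hs
    rw [Measure.map_apply hf hs, withDensity_apply _ (hf hs), Function.comp_def,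
      ← setLIntegral_map hs (Measure.measurable_rnDeriv _ _) hf,
      Measure.setLIntegral_rnDeriv (Measure.absolutelyContinuous_of_le_smul hP)]

/-- `Ω` with the σ-algebra `m`, so that `∀ k, WithMeasurableSpace Ω (F k)` carries the product of
the σ-algebras `F k`. -/
def WithMeasurableSpace (Ω : Type*) (_m : MeasurableSpace Ω) : Type _ := Ω

instance {Ω : Type*} (m : MeasurableSpace Ω) : MeasurableSpace (WithMeasurableSpace Ω m) := m

section Coupling

variable {ι : Type*} [Fintype ι] {Ω : Type*} [m0 : MeasurableSpace Ω] {μ : Measure Ω}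
  {F : ι → MeasurableSpace Ω}

theorem exists_le_smul_measure_iInter_eq_prod [IsFiniteMeasure μ] (hF : ∀ k, F k ≤ m0)
    {c : ℝ≥0∞} (hc : c ≠ 0)
    (hdom : ∀ A : ι → Set Ω, (∀ k, MeasurableSet[F k] (A k)) →
      c * ∏ k, μ (A k) ≤ μ (⋂ k, A k)) :
    ∃ ν : Measure Ω, ν ≤ c⁻¹ • μ ∧ ∀ A : ι → Set Ω, (∀ k, MeasurableSet[F k] (A k)) →
      ν (⋂ k, A k) = ∏ k, μ (A k) := by
  let diag : Ω → ∀ k, WithMeasurableSpace Ω (F k) := fun ω _ => ω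
  have hdiag : Measurable diag := measurable_pi_lambda _ fun k => measurable_id'' (hF k)
  have hcoord : ∀ k, Measurable fun ω => diag ω k := fun k => measurable_pi_apply k |>.comp hdiag
  let P := Measure.pi fun k => μ.map fun ω => diag ω k
  have hdiag_pi : ∀ A : ∀ k, Set (WithMeasurableSpace Ω (F k)),
      diag ⁻¹' univ.pi A = ⋂ k, (A k : Set Ω) := fun A => by
    ext ω
    exact ⟨fun h => mem_iInter.2 fun k => h k (mem_univ k), fun h k _ => mem_iInter.1 h k⟩
  have hP : ∀ A : ∀ k, Set (WithMeasurableSpace Ω (F k)), (∀ k, MeasurableSet (A k)) →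
      P (univ.pi A) = ∏ k, μ (A k) := fun A hA => by
    rw [Measure.pi_pi]
    exact Finset.prod_congr rfl fun k _ => Measure.map_apply (hcoord k) (hA k)
  have := (μ.map diag).smul_finite (ENNReal.inv_ne_top.2 hc)
  have hPle : P ≤ c⁻¹ • μ.map diag := Measure.le_of_forall_pi_le fun A hA => by
    rw [Measure.smul_apply, smul_eq_mul, Measure.map_apply hdiag (.univ_pi hA), hdiag_pi, hP A hA,
      ← ENNReal.div_eq_inv_mul, ENNReal.le_div_iff_mul_le (.inl hc) (.inr (measure_ne_top _ _)),
      mul_comm]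
    exact hdom A hA
  obtain ⟨ν, hν, hνP⟩ := exists_le_smul_map_eq hdiag hPle
  refine ⟨ν, hν, fun A hA => ?_⟩
  rw [← hdiag_pi A, ← Measure.map_apply hdiag (.univ_pi hA), hνP, hP A hA]

theorem measure_eq_of_measure_iInter_eq_prod [IsProbabilityMeasure μ] {ν : Measure Ω}
    (h : ∀ A : ι → Set Ω, (∀ k, MeasurableSet[F k] (A k)) → ν (⋂ k, A k) = ∏ k, μ (A k))
    {k : ι} {s : Set Ω} (hs : MeasurableSet[F k] s) : ν s = μ s := by
  classical
  have := h (fun j => if j = k then s else univ) fun j => by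
    split_ifs with hj
    · exact hj ▸ hs
    · exact .univ
  simpa [apply_ite μ, Finset.prod_ite_eq', iInter_ite] using this

theorem trim_eq_of_measure_iInter_eq_prod [IsProbabilityMeasure μ] (hF : ∀ k, F k ≤ m0)
    {ν : Measure Ω}
    (h : ∀ A : ι → Set Ω, (∀ k, MeasurableSet[F k] (A k)) → ν (⋂ k, A k) = ∏ k, μ (A k))
    (k : ι) : ν.trim (hF k) = μ.trim (hF k) := by
  refine @Measure.ext _ (F k) _ _ fun s hs => ?_
  rw [trim_measurableSet_eq _ hs, trim_measurableSet_eq _ hs,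
    measure_eq_of_measure_iInter_eq_prod h hs]

theorem iIndep_of_measure_iInter_eq_prod [IsProbabilityMeasure μ] {ν : Measure Ω}
    (h : ∀ A : ι → Set Ω, (∀ k, MeasurableSet[F k] (A k)) → ν (⋂ k, A k) = ∏ k, μ (A k)) :
    iIndep F ν := by
  classical
  refine (iIndep_iff F ν).2 fun S f hf => ?_
  have := h (fun i => if i ∈ S then f i else univ) fun i => by
    split_ifs with hi
    exacts [hf i hi, .univ]
  rw [Finset.prod_congr rfl fun i hi => measure_eq_of_measure_iInter_eq_prod h (hf i hi)]
  simpa [apply_ite μ, Finset.prod_ite_mem, iInter_ite] using this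

end Coupling

theorem setIntegral_eq_of_trim_eq {Ω E : Type*} [NormedAddCommGroup E] [NormedSpace ℝ E]
    {m m0 : MeasurableSpace Ω} {μ ν : Measure Ω} (hm : m ≤ m0) (h : ν.trim hm = μ.trim hm)
    {f : Ω → E} (hf : StronglyMeasurable[m] f) {s : Set Ω} (hs : MeasurableSet[m] s) :
    ∫ x in s, f x ∂ν = ∫ x in s, f x ∂μ := by
  rw [← integral_indicator (hm s hs), ← integral_indicator (hm s hs),
    integral_trim hm (hf.indicator hs), integral_trim hm (hf.indicator hs), h]

section InverseMarginal

variable {ι : Type*} [Fintype ι] {Ω : Type*} [m0 : MeasurableSpace Ω] {μ ν : Measure Ω}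
  {F : ι → MeasurableSpace Ω} {ξ : ι → Ω → ℝ} {c : ℝ}

theorem setIntegral_sum_sub_eq [IsFiniteMeasure ν] (hF : ∀ k, F k ≤ m0)
    (hmarg : ∀ k, ν.trim (hF k) = μ.trim (hF k))
    (hind : Pairwise fun k l => Indep (F k) (F l) ν) (hξm : ∀ k, Measurable[F k] (ξ k))
    (hξ : ∀ k, Integrable (ξ k) ν) (hmean : ∀ k, ∫ ω, ξ k ω ∂μ = c)
    {k : ι} {s : Set Ω} (hs : MeasurableSet[F k] s) :
    ∫ ω in s, (∑ l, ξ l ω - (Fintype.card ι - 1) * c) ∂ν = ∫ ω in s, ξ k ω ∂μ := by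
  classical
  have hνs : ν.real s = μ.real s := by
    rw [measureReal_def, measureReal_def, ← trim_measurableSet_eq (hF k) hs, hmarg,
      trim_measurableSet_eq (hF k) hs]
  have hother : ∀ l ∈ Finset.univ.erase k, ∫ ω in s, ξ l ω ∂ν = μ.real s * c := by
    intro l hl
    have hindep := indep_of_indep_of_le_right (hind (Finset.ne_of_mem_erase hl).symm)
      (hξm l).comap_le
    calc ∫ ω in s, ξ l ω ∂ν = ν.real s * ∫ ω, ξ l ω ∂ν :=
          hindep.setIntegral_eq_mul (f := id) (hF k) ((hξm l).mono (hF l) le_rfl).aemeasurable hs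
            aestronglyMeasurable_id
      _ = μ.real s * c := by
          rw [hνs, ← setIntegral_univ,
            setIntegral_eq_of_trim_eq (hF l) (hmarg l) (hξm l).stronglyMeasurable .univ,
            setIntegral_univ, hmean]
  rw [integral_sub (integrable_finsetSum _ fun l _ => (hξ l).integrableOn) (integrable_const _),
    integral_finsetSum _ fun l _ => (hξ l).integrableOn, setIntegral_const,
    ← Finset.add_sum_erase _ _ (Finset.mem_univ k), Finset.sum_congr rfl hother,
    setIntegral_eq_of_trim_eq (hF k) (hmarg k) (hξm k).stronglyMeasurable hs, hνs,
    Finset.sum_const, Finset.card_erase_of_mem (Finset.mem_univ k), Finset.card_univ,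
    nsmul_eq_mul, Nat.cast_sub (Fintype.card_pos_iff.2 ⟨k⟩), smul_eq_mul]
  ring

theorem exists_memLp_condExp_eq_of_pairwise_indep [IsFiniteMeasure μ] (hF : ∀ k, F k ≤ m0)
    {C : ℝ≥0∞} (hC : C ≠ ∞) (hνμ : ν ≤ C • μ) (hmarg : ∀ k, ν.trim (hF k) = μ.trim (hF k))
    (hind : Pairwise fun k l => Indep (F k) (F l) ν) {p : ℝ≥0∞} (hp : 1 ≤ p)
    (hξm : ∀ k, Measurable[F k] (ξ k)) (hξ : ∀ k, MemLp (ξ k) p μ)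
    (hmean : ∀ k, ∫ ω, ξ k ω ∂μ = c) :
    ∃ ξ₀ : Ω → ℝ, MemLp ξ₀ p μ ∧ ∀ k, μ[ξ₀|F k] =ᵐ[μ] ξ k := by
  have := μ.smul_finite hC
  have := isFiniteMeasure_of_le _ hνμ
  set η := fun ω => ∑ l, ξ l ω - (Fintype.card ι - 1) * c
  have hη : MemLp η p μ := (memLp_finsetSum _ fun l _ => hξ l).sub (memLp_const _)
  have hξ₀ : MemLp (fun ω => (ν.rnDeriv μ ω).toReal * η ω) p μ := by
    have hD : AEStronglyMeasurable (fun ω => (ν.rnDeriv μ ω).toReal) μ :=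
      (Measure.measurable_rnDeriv ν μ).ennreal_toReal.aestronglyMeasurable
    refine hη.of_le_mul (c := C.toReal) (hD.mul hη.aestronglyMeasurable) ?_
    filter_upwards [Measure.rnDeriv_le_of_le_smul hνμ] with ω hω
    rw [norm_mul, Real.norm_of_nonneg ENNReal.toReal_nonneg]
    exact mul_le_mul_of_nonneg_right (ENNReal.toReal_mono hC hω) (norm_nonneg _)
  refine ⟨_, hξ₀, fun k => (ae_eq_condExp_of_forall_setIntegral_eq (hF k) (hξ₀.integrable hp)
    (fun s _ _ => ((hξ k).integrable hp).integrableOn) (fun s hs _ => ?_)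
    (hξm k).stronglyMeasurable.aestronglyMeasurable).symm⟩
  rw [setIntegral_toReal_rnDeriv_mul (Measure.absolutelyContinuous_of_le_smul hνμ) (hF k s hs),
    setIntegral_sum_sub_eq hF hmarg hind hξm
      (fun l => (((hξ l).integrable hp).smul_measure hC).mono_measure hνμ) hmean hs]

end InverseMarginal

end MeasureTheory

/-- if `μ(A 1 ∩ ... ∩ A n) ≥ α μ(A 1) ⋯ μ(A n)` for some `α > 0`
and all `A k ∈ 𝓕 k`, then the collection of sub-σ-algebras `𝓕 1, ..., 𝓕 n`
possesses the inverse marginal property. -/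
theorem stmt_19 {Ω : Type*} [m0 : MeasurableSpace Ω] (μ : Measure Ω)
    [IsProbabilityMeasure μ] {n : ℕ}
    (F : Fin n → MeasurableSpace Ω) (hF : ∀ k, F k ≤ m0)
    (α : ℝ) (hα : 0 < α)
    (hdom : ∀ A : Fin n → Set Ω, (∀ k, MeasurableSet[F k] (A k)) →
      ENNReal.ofReal α * ∏ k, μ (A k) ≤ μ (⋂ k, A k)) :
    ∀ ξ : Fin n → Ω → ℝ,
      (∀ k, Measurable[F k] (ξ k)) →
      (∀ k, MemLp (ξ k) 2 μ) →
      (∀ k l, ∫ ω, ξ k ω ∂μ = ∫ ω, ξ l ω ∂μ) →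
      ∃ ξ₀ : Ω → ℝ, MemLp ξ₀ 2 μ ∧
        ∀ k, MeasureTheory.condExp (F k) μ ξ₀ =ᵐ[μ] ξ k := by
  intro ξ hξm hξ2 hmean
  rcases isEmpty_or_nonempty (Fin n) with _ | ⟨⟨k₀⟩⟩
  · exact ⟨0, MemLp.zero, isEmptyElim⟩
  have hc : ENNReal.ofReal α ≠ 0 := (ENNReal.ofReal_pos.2 hα).ne'
  obtain ⟨ν, hνμ, hprod⟩ := exists_le_smul_measure_iInter_eq_prod hF hc hdom
  exact exists_memLp_condExp_eq_of_pairwise_indep hF (ENNReal.inv_ne_top.2 hc) hνμ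
    (trim_eq_of_measure_iInter_eq_prod hF hprod)
    (fun k l hkl => (iIndep_of_measure_iInter_eq_prod hprod).indep hkl) one_le_two hξm hξ2
    fun k => hmean k k₀
end
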